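/- arXiv:gr-qc/0607022 — 11 statements merged into one kernel-verified Lean document; each statement's English description precedes it below -/
import Mathlib

section
/- Let R > 0 and 0 < 2M < R, and set χ = 2M/R. Let m : [0,R] → ℝ be continuous with m(R) = M and 0 ≤ 2m(r) < r for all r ∈ (0,R], and let ζ : [0,R] → ℝ be continuous on [0,R], differentiable on (0,R), with ζ(R) = √(1−χ). Suppose that for every r ∈ (0,R) one has m(r) ≥ M r³/R³ and (1/r)·√(1−2m(r)/r)·ζ′(r) ≥ M/R³. Then ζ(0) ≤ (3/2)√(1−χ) − 1/2. -/
open Real Set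

/-!
With `a = M / R³`, the function `r ↦ ζ r + ½ √(1 - 2 a r²)` is nondecreasing on `[0, R]`:
the mass bound `m r ≥ a r³` gives `√(1 - 2 m r / r) ≤ √(1 - 2 a r²)`, so the hypothesis
on `ζ'` yields `ζ' r ≥ a r / √(1 - 2 a r²)`, which is minus the derivative of the added
term. Comparing the values at `0` and at `R`, where `2 a R² = χ`, gives the bound.
-/

lemma hasDerivAt_sqrt_one_sub_two_mul_sq {a r : ℝ} (h : 1 - 2 * a * r ^ 2 ≠ 0) :
    HasDerivAt (fun x => √(1 - 2 * a * x ^ 2)) (-(2 * a * r) / √(1 - 2 * a * r ^ 2)) r := by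
  have h_inner : HasDerivAt (fun x => 1 - 2 * a * x ^ 2) (-(4 * a * r)) r := by
    refine (((hasDerivAt_pow 2 r).const_mul (2 * a)).const_sub 1).congr_deriv ?_
    norm_num; ring
  convert h_inner.sqrt h using 1
  field_simp
  ring

lemma div_sqrt_le_of_le_mul_sqrt {a r μ z : ℝ} (ha : 0 ≤ a) (hr : 0 < r) (hμr : 2 * μ < r)
    (hμ : a * r ^ 3 ≤ μ) (h : a ≤ 1 / r * √(1 - 2 * μ / r) * z) :
    a * r / √(1 - 2 * a * r ^ 2) ≤ z := by
  have hs : 0 < √(1 - 2 * μ / r) := by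
    rw [Real.sqrt_pos, sub_pos, div_lt_one hr]; exact hμr
  have hst : √(1 - 2 * μ / r) ≤ √(1 - 2 * a * r ^ 2) := by
    apply Real.sqrt_le_sqrt
    rw [sub_le_sub_iff_left, le_div_iff₀ hr]
    nlinarith
  calc a * r / √(1 - 2 * a * r ^ 2) ≤ a * r / √(1 - 2 * μ / r) :=
        div_le_div_of_nonneg_left (by positivity) hs hst
    _ ≤ z := by
        rw [div_le_iff₀ hs]
        calc a * r ≤ 1 / r * √(1 - 2 * μ / r) * z * r := by gcongr
          _ = z * √(1 - 2 * μ / r) := by field_simp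

lemma monotoneOn_add_half_sqrt_one_sub_two_mul_sq {a R : ℝ} {ζ ζ' : ℝ → ℝ} (ha : 0 ≤ a)
    (haR : 2 * a * R ^ 2 < 1) (hζ_cont : ContinuousOn ζ (Icc 0 R))
    (hζ_deriv : ∀ r ∈ Ioo 0 R, HasDerivAt ζ (ζ' r) r)
    (hζ' : ∀ r ∈ Ioo 0 R, a * r / √(1 - 2 * a * r ^ 2) ≤ ζ' r) :
    MonotoneOn (fun r => ζ r + √(1 - 2 * a * r ^ 2) / 2) (Icc 0 R) := by
  have hne : ∀ r ∈ Ioo 0 R, 1 - 2 * a * r ^ 2 ≠ 0 := fun r ⟨h0, hR⟩ => by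
    have : r ^ 2 ≤ R ^ 2 := by gcongr
    nlinarith
  refine monotoneOn_of_hasDerivWithinAt_nonneg (convex_Icc 0 R)
    (hζ_cont.add (by fun_prop)) (fun r hr => ?_) (fun r hr => ?_)
    (f' := fun r => ζ' r + -(2 * a * r) / √(1 - 2 * a * r ^ 2) / 2)
  all_goals rw [interior_Icc] at hr
  · exact ((hζ_deriv r hr).add
      ((hasDerivAt_sqrt_one_sub_two_mul_sq (hne r hr)).div_const 2)).hasDerivWithinAt
  · have hsqrt_deriv :
        -(2 * a * r) / √(1 - 2 * a * r ^ 2) / 2 = -(a * r / √(1 - 2 * a * r ^ 2)) := by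
      ring
    linarith [hζ' r hr]

theorem buchdahl_bondi_zeta_center_bound_general
    (R M χ : ℝ) (hR : 0 < R) (hM : 0 < 2 * M) (hMR : 2 * M < R)
    (hχ : χ = 2 * M / R)
    (m ζ ζ' : ℝ → ℝ)
    (hm_bound : ∀ r ∈ Ioc (0:ℝ) R, 0 ≤ 2 * m r ∧ 2 * m r < r)
    (hζ_cont : ContinuousOn ζ (Icc 0 R))
    (hζ_deriv : ∀ r ∈ Ioo (0:ℝ) R, HasDerivAt ζ (ζ' r) r)
    (hζR : ζ R = Real.sqrt (1 - χ))
    (hm_ge : ∀ r ∈ Ioo (0:ℝ) R, m r ≥ M * r ^ 3 / R ^ 3)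
    (hineq : ∀ r ∈ Ioo (0:ℝ) R,
      (1 / r) * Real.sqrt (1 - 2 * m r / r) * ζ' r ≥ M / R ^ 3) :
    ζ 0 ≤ (3 / 2) * Real.sqrt (1 - χ) - 1 / 2 := by
  have ha : 0 ≤ M / R ^ 3 := div_nonneg (by linarith) (by positivity)
  have haR : 2 * (M / R ^ 3) * R ^ 2 = χ := by rw [hχ]; field_simp
  have hχ1 : χ < 1 := by rw [hχ, div_lt_one hR]; exact hMR
  have hmono := monotoneOn_add_half_sqrt_one_sub_two_mul_sq ha (haR ▸ hχ1) hζ_cont hζ_deriv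
    fun r hr => div_sqrt_le_of_le_mul_sqrt ha hr.1 (hm_bound r (Ioo_subset_Ioc_self hr)).2
      (by rw [div_mul_eq_mul_div]; exact hm_ge r hr) (hineq r hr)
  have h0R := hmono (left_mem_Icc.2 hR.le) (right_mem_Icc.2 hR.le) hR.le
  simp only [haR, hζR] at h0R
  norm_num at h0R
  linarith

theorem buchdahl_bondi_zeta_center_bound
    (R M χ : ℝ) (hR : 0 < R) (hM : 0 < 2 * M) (hMR : 2 * M < R)
    (hχ : χ = 2 * M / R)
    (m ζ ζ' : ℝ → ℝ)
    (hm_cont : ContinuousOn m (Icc 0 R))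
    (hmR : m R = M)
    (hm_bound : ∀ r ∈ Ioc (0:ℝ) R, 0 ≤ 2 * m r ∧ 2 * m r < r)
    (hζ_cont : ContinuousOn ζ (Icc 0 R))
    (hζ_deriv : ∀ r ∈ Ioo (0:ℝ) R, HasDerivAt ζ (ζ' r) r)
    (hζR : ζ R = Real.sqrt (1 - χ))
    (hm_ge : ∀ r ∈ Ioo (0:ℝ) R, m r ≥ M * r ^ 3 / R ^ 3)
    (hineq : ∀ r ∈ Ioo (0:ℝ) R,
      (1 / r) * Real.sqrt (1 - 2 * m r / r) * ζ' r ≥ M / R ^ 3) :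
    ζ 0 ≤ (3 / 2) * Real.sqrt (1 - χ) - 1 / 2 :=
  buchdahl_bondi_zeta_center_bound_general R M χ hR hM hMR hχ m ζ ζ' hm_bound hζ_cont hζ_deriv hζR
    hm_ge hineq
end

section
/- Let R > 0 and 0 < 2M < R, and set χ = 2M/R. Let m : [0,R] → ℝ be continuous with m(R) = M and 0 ≤ 2m(r) < r for all r ∈ (0,R], and let ζ : [0,R] → ℝ be continuous on [0,R], differentiable on (0,R), with ζ(R) = √(1−χ). Suppose that for every r ∈ (0,R) one has m(r) ≥ M r³/R³ and (1/r)·√(1−2m(r)/r)·ζ′(r) ≥ M/R³, and suppose further that ζ(0) > 0 (no horizon inside the star). Then χ = 2M/R < 8/9. -/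
/-!
With `c = M / R³`, the bound `m(r) ≥ c r³` gives `1 - 2m(r)/r ≤ 1 - 2cr²`, so the hypothesis on `ζ'`
yields `ζ'(r) ≥ c r / √(1 - 2cr²)`. Hence `ζ(r) + √(1 - 2cr²)/2`, the comparison function given by
the constant-density (Schwarzschild interior) solution, is nondecreasing on `[0, R]`. Comparing its
values at `0` and `R` gives `ζ(0) + 1/2 ≤ (3/2)√(1 - χ)`, and `ζ(0) > 0` forces `√(1 - χ) > 1/3`.
-/

open Real Set

section Pointwise

variable {c r m d : ℝ}

lemma one_sub_two_mul_div_pos (hr : 0 < r) (hmr : 2 * m < r) : 0 < 1 - 2 * m / r :=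
  sub_pos.mpr ((div_lt_one hr).mpr hmr)

lemma one_sub_two_mul_div_le (hr : 0 < r) (hm : c * r ^ 3 ≤ m) :
    1 - 2 * m / r ≤ 1 - 2 * c * r ^ 2 := by
  rw [sub_le_sub_iff_left, le_div_iff₀ hr]
  nlinarith

lemma mul_div_sqrt_le_of_le_mul_sqrt (hc : 0 ≤ c) (hr : 0 < r) (hm : c * r ^ 3 ≤ m)
    (hmr : 2 * m < r) (h : c ≤ 1 / r * √(1 - 2 * m / r) * d) :
    c * r / √(1 - 2 * c * r ^ 2) ≤ d := by
  have hv : 0 < √(1 - 2 * m / r) := sqrt_pos.mpr (one_sub_two_mul_div_pos hr hmr)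
  calc c * r / √(1 - 2 * c * r ^ 2)
      ≤ c * r / √(1 - 2 * m / r) :=
        div_le_div_of_nonneg_left (by positivity) hv
          (sqrt_le_sqrt (one_sub_two_mul_div_le hr hm))
    _ ≤ d := by
        rw [div_le_iff₀ hv]
        calc c * r ≤ 1 / r * √(1 - 2 * m / r) * d * r := mul_le_mul_of_nonneg_right h hr.le
          _ = d * √(1 - 2 * m / r) := by field_simp

end Pointwise

lemma hasDerivAt_sqrt_one_sub_two_mul_mul_sq {c r : ℝ} (h : 0 < 1 - 2 * c * r ^ 2) :
    HasDerivAt (fun x => √(1 - 2 * c * x ^ 2)) (-(2 * c * r) / √(1 - 2 * c * r ^ 2)) r := by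
  have hu : HasDerivAt (fun x => 1 - 2 * c * x ^ 2) (-(4 * c * r)) r :=
    (((hasDerivAt_pow 2 r).const_mul (2 * c)).const_sub 1).congr_deriv (by norm_num; ring)
  refine (hu.sqrt h.ne').congr_deriv ?_
  field_simp
  ring

lemma add_half_sqrt_le_add_half_sqrt {a b c : ℝ} {ζ ζ' : ℝ → ℝ} (hab : a ≤ b)
    (hζ_cont : ContinuousOn ζ (Icc a b)) (hζ_deriv : ∀ r ∈ Ioo a b, HasDerivAt ζ (ζ' r) r)
    (hpos : ∀ r ∈ Ioo a b, 0 < 1 - 2 * c * r ^ 2)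
    (hζ' : ∀ r ∈ Ioo a b, c * r / √(1 - 2 * c * r ^ 2) ≤ ζ' r) :
    ζ a + √(1 - 2 * c * a ^ 2) / 2 ≤ ζ b + √(1 - 2 * c * b ^ 2) / 2 := by
  have hφ' : ∀ r ∈ Ioo a b, HasDerivAt (fun x => ζ x + √(1 - 2 * c * x ^ 2) / 2)
      (ζ' r - c * r / √(1 - 2 * c * r ^ 2)) r := fun r hr =>
    ((hζ_deriv r hr).add
      ((hasDerivAt_sqrt_one_sub_two_mul_mul_sq (hpos r hr)).div_const 2)).congr_deriv (by ring)
  have hmono := monotoneOn_of_hasDerivWithinAt_nonneg (convex_Icc a b)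
    (hζ_cont.add (by fun_prop))
    (fun r hr => (hφ' r (by rwa [interior_Icc] at hr)).hasDerivWithinAt)
    (fun r hr => sub_nonneg.mpr (hζ' r (by rwa [interior_Icc] at hr)))
  exact hmono (left_mem_Icc.mpr hab) (right_mem_Icc.mpr hab) hab

theorem generalized_buchdahl_bondi_bound_general
    (R M χ : ℝ) (hR : 0 < R) (hM : 0 < 2 * M)
    (hχ : χ = 2 * M / R)
    (m ζ ζ' : ℝ → ℝ)
    (hm_bound : ∀ r ∈ Ioc (0:ℝ) R, 0 ≤ 2 * m r ∧ 2 * m r < r)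
    (hζ_cont : ContinuousOn ζ (Icc 0 R))
    (hζ_deriv : ∀ r ∈ Ioo (0:ℝ) R, HasDerivAt ζ (ζ' r) r)
    (hζR : ζ R = Real.sqrt (1 - χ))
    (hm_ge : ∀ r ∈ Ioo (0:ℝ) R, m r ≥ M * r ^ 3 / R ^ 3)
    (hineq : ∀ r ∈ Ioo (0:ℝ) R,
      (1 / r) * Real.sqrt (1 - 2 * m r / r) * ζ' r ≥ M / R ^ 3)
    (hζ0 : 0 < ζ 0) :
    χ < 8 / 9 := by
  set c := M / R ^ 3
  have hc : 0 ≤ c := div_nonneg (by linarith) (by positivity)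
  have hmc : ∀ r ∈ Ioo 0 R, c * r ^ 3 ≤ m r := fun r hr => by
    rw [div_mul_eq_mul_div]; exact hm_ge r hr
  have hmr : ∀ r ∈ Ioo 0 R, 2 * m r < r := fun r hr => (hm_bound r (Ioo_subset_Ioc_self hr)).2
  have hpos : ∀ r ∈ Ioo 0 R, 0 < 1 - 2 * c * r ^ 2 := fun r hr =>
    (one_sub_two_mul_div_pos hr.1 (hmr r hr)).trans_le (one_sub_two_mul_div_le hr.1 (hmc r hr))
  have hcR : 1 - 2 * c * R ^ 2 = 1 - χ := by
    rw [hχ]; simp only [c]; field_simp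
  have hcomp : ζ 0 + 1 / 2 ≤ √(1 - χ) + √(1 - χ) / 2 := by
    simpa [hcR, hζR] using add_half_sqrt_le_add_half_sqrt hR.le hζ_cont hζ_deriv hpos
      fun r hr => mul_div_sqrt_le_of_le_mul_sqrt hc hr.1 (hmc r hr) (hmr r hr) (hineq r hr)
  have hsqrt : 1 / 3 < √(1 - χ) := by linarith
  have := (lt_sqrt (by norm_num)).mp hsqrt
  linarith

theorem generalized_buchdahl_bondi_bound
    (R M χ : ℝ) (hR : 0 < R) (hM : 0 < 2 * M) (hMR : 2 * M < R)
    (hχ : χ = 2 * M / R)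
    (m ζ ζ' : ℝ → ℝ)
    (hm_cont : ContinuousOn m (Icc 0 R))
    (hmR : m R = M)
    (hm_bound : ∀ r ∈ Ioc (0:ℝ) R, 0 ≤ 2 * m r ∧ 2 * m r < r)
    (hζ_cont : ContinuousOn ζ (Icc 0 R))
    (hζ_deriv : ∀ r ∈ Ioo (0:ℝ) R, HasDerivAt ζ (ζ' r) r)
    (hζR : ζ R = Real.sqrt (1 - χ))
    (hm_ge : ∀ r ∈ Ioo (0:ℝ) R, m r ≥ M * r ^ 3 / R ^ 3)
    (hineq : ∀ r ∈ Ioo (0:ℝ) R,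
      (1 / r) * Real.sqrt (1 - 2 * m r / r) * ζ' r ≥ M / R ^ 3)
    (hζ0 : 0 < ζ 0) :
    χ < 8 / 9 :=
  generalized_buchdahl_bondi_bound_general R M χ hR hM hχ m ζ ζ' hm_bound hζ_cont hζ_deriv hζR hm_ge
    hineq hζ0
end

section
/- Let R > 0 and 0 < 2M < R, and set χ = 2M/R. Let m : [0,R] → ℝ be continuous with m(R) = M and 0 ≤ 2m(r) < r for all r ∈ (0,R], and let ζ : [0,R] → ℝ be continuous on [0,R], differentiable on (0,R), with ζ(R) = √(1−χ). Suppose that for every r ∈ (0,R) one has m(r) ≥ M r³/R³ and (1/r)·√(1−2m(r)/r)·ζ′(r) ≥ M/R³. Then for every r ∈ [0,R], ζ(r) ≤ (1/2)·(3√(1−χ) − √(1−χ(r/R)²)); that is, ζ is bounded above pointwise by the corresponding metric function ζ*(r) of the constant-density (interior Schwarzschild) star of the same mass and radius. -/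
/-!
Both `ζ` and the constant-density profile `ζ*` equal `√(1 - χ)` at the surface. Where
`m(r) ≥ M r³/R³` we have `√(1 - 2m/r) ≤ √(1 - χ (r/R)²)`, and the lower bound on
`(1/r) √(1 - 2m/r) ζ'` then gives `ζ' ≥ M r / (R³ √(1 - χ (r/R)²)) = ζ*'`. Hence `ζ - ζ*` is
nondecreasing on `[0, R]` and vanishes at `R`, so it is nonpositive.
-/

open Real Set

/-- The metric function `ζ*` of the constant-density star of compactness `χ` and radius `R`. -/
noncomputable def interiorSchwarzschildZeta (χ R r : ℝ) : ℝ :=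
  (1 / 2) * (3 * √(1 - χ) - √(1 - χ * (r / R) ^ 2))

theorem interiorSchwarzschildZeta_self {R : ℝ} (hR : R ≠ 0) (χ : ℝ) :
    interiorSchwarzschildZeta χ R R = √(1 - χ) := by
  rw [interiorSchwarzschildZeta, div_self hR, one_pow, mul_one]
  ring

theorem continuous_interiorSchwarzschildZeta (χ R : ℝ) :
    Continuous (interiorSchwarzschildZeta χ R) := by
  unfold interiorSchwarzschildZeta
  fun_prop

theorem hasDerivAt_interiorSchwarzschildZeta {χ R r : ℝ} (hR : R ≠ 0)
    (hu : 0 < 1 - χ * (r / R) ^ 2) :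
    HasDerivAt (interiorSchwarzschildZeta χ R)
      (χ * r / (2 * R ^ 2 * √(1 - χ * (r / R) ^ 2))) r := by
  have hdiv : HasDerivAt (fun t : ℝ => t / R) (1 / R) r := by
    simpa using (hasDerivAt_id r).div_const R
  have hsqrt := (((hdiv.pow 2).const_mul χ).const_sub 1).sqrt hu.ne'
  refine ((hsqrt.const_sub (3 * √(1 - χ))).const_mul (1 / 2 : ℝ)).congr_deriv ?_
  have hsqrt_pos : 0 < √(1 - χ * (r / R) ^ 2) := sqrt_pos.mpr hu
  simp only [Pi.pow_apply]
  norm_num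
  field_simp

theorem one_sub_mul_sq_div_pos {χ R r : ℝ} (hχ : χ < 1) (hr₀ : 0 ≤ r) (hrR : r < R) :
    0 < 1 - χ * (r / R) ^ 2 := by
  have h₀ : 0 ≤ (r / R) ^ 2 := sq_nonneg _
  have h₁ : (r / R) ^ 2 < 1 :=
    pow_lt_one₀ (div_nonneg hr₀ (hr₀.trans_lt hrR).le) ((div_lt_one (hr₀.trans_lt hrR)).mpr hrR)
      two_ne_zero
  nlinarith

theorem le_mul_of_le_mul_of_le {w u d c : ℝ} (hw : 0 ≤ w) (hwu : w ≤ u) (hc : 0 < c)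
    (h : c ≤ w * d) : c ≤ u * d := by
  have hd : 0 < d := pos_of_mul_pos_right (hc.trans_le h) hw
  exact h.trans (mul_le_mul_of_nonneg_right hwu hd.le)

theorem sqrt_one_sub_two_mul_div_le {R M m r : ℝ} (hR : 0 < R) (hr : 0 < r)
    (hm : M * r ^ 3 / R ^ 3 ≤ m) :
    √(1 - 2 * m / r) ≤ √(1 - 2 * M / R * (r / R) ^ 2) := by
  apply sqrt_le_sqrt
  have : 2 * M / R * (r / R) ^ 2 = 2 * (M * r ^ 3 / R ^ 3) / r := by
    field_simp
  rw [this]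
  gcongr

theorem le_of_hasDerivAt_le_of_eq_right {f g f' g' : ℝ → ℝ} {a b : ℝ}
    (hf : ContinuousOn f (Icc a b)) (hg : ContinuousOn g (Icc a b))
    (hf' : ∀ x ∈ Ioo a b, HasDerivAt f (f' x) x) (hg' : ∀ x ∈ Ioo a b, HasDerivAt g (g' x) x)
    (hle : ∀ x ∈ Ioo a b, g' x ≤ f' x) (hb : f b = g b) :
    ∀ x ∈ Icc a b, f x ≤ g x := by
  have hmono : MonotoneOn (fun x => f x - g x) (Icc a b) := by
    refine monotoneOn_of_hasDerivWithinAt_nonneg (convex_Icc a b) (hf.sub hg)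
      (fun x hx => ?_) (fun x hx => ?_) (f' := fun x => f' x - g' x)
    · rw [interior_Icc] at hx
      exact ((hf' x hx).sub (hg' x hx)).hasDerivWithinAt
    · rw [interior_Icc] at hx
      exact sub_nonneg.mpr (hle x hx)
  intro x hx
  have := hmono hx (right_mem_Icc.mpr (hx.1.trans hx.2)) hx.2
  simp only [hb, sub_self] at this
  linarith

theorem interiorSchwarzschildZeta_slope_le {R M m r z' : ℝ} (hR : 0 < R) (hM : 0 < M)
    (hr : 0 < r) (hu : 0 < 1 - 2 * M / R * (r / R) ^ 2) (hm : M * r ^ 3 / R ^ 3 ≤ m)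
    (h : M / R ^ 3 ≤ 1 / r * √(1 - 2 * m / r) * z') :
    2 * M / R * r / (2 * R ^ 2 * √(1 - 2 * M / R * (r / R) ^ 2)) ≤ z' := by
  have hc : 0 < M * r / R ^ 3 := by positivity
  have h' : M * r / R ^ 3 ≤ √(1 - 2 * m / r) * z' :=
    calc M * r / R ^ 3 = r * (M / R ^ 3) := by ring
      _ ≤ r * (1 / r * √(1 - 2 * m / r) * z') := by gcongr
      _ = √(1 - 2 * m / r) * z' := by field_simp
  have hz := le_mul_of_le_mul_of_le (sqrt_nonneg _) (sqrt_one_sub_two_mul_div_le hR hr hm) hc h'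
  rw [div_le_iff₀ (by positivity)]
  calc 2 * M / R * r = 2 * R ^ 2 * (M * r / R ^ 3) := by field_simp
    _ ≤ 2 * R ^ 2 * (√(1 - 2 * M / R * (r / R) ^ 2) * z') := by gcongr
    _ = z' * (2 * R ^ 2 * √(1 - 2 * M / R * (r / R) ^ 2)) := by ring

theorem zeta_bounded_by_interior_schwarzschild_general
    (R M χ : ℝ) (hR : 0 < R) (hM : 0 < 2 * M) (hMR : 2 * M < R)
    (hχ : χ = 2 * M / R)
    (m ζ ζ' : ℝ → ℝ)
    (hζ_cont : ContinuousOn ζ (Icc 0 R))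
    (hζ_deriv : ∀ r ∈ Ioo (0:ℝ) R, HasDerivAt ζ (ζ' r) r)
    (hζR : ζ R = Real.sqrt (1 - χ))
    (hm_ge : ∀ r ∈ Ioo (0:ℝ) R, m r ≥ M * r ^ 3 / R ^ 3)
    (hineq : ∀ r ∈ Ioo (0:ℝ) R,
      (1 / r) * Real.sqrt (1 - 2 * m r / r) * ζ' r ≥ M / R ^ 3) :
    ∀ r ∈ Icc (0:ℝ) R,
      ζ r ≤ (1 / 2) * (3 * Real.sqrt (1 - χ) - Real.sqrt (1 - χ * (r / R) ^ 2)) := by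
  have hχ1 : χ < 1 := by rw [hχ, div_lt_one hR]; linarith
  have hu : ∀ s ∈ Ioo 0 R, 0 < 1 - χ * (s / R) ^ 2 := fun s hs =>
    one_sub_mul_sq_div_pos hχ1 hs.1.le hs.2
  subst hχ
  refine le_of_hasDerivAt_le_of_eq_right hζ_cont
    (continuous_interiorSchwarzschildZeta _ R).continuousOn hζ_deriv
    (fun s hs => hasDerivAt_interiorSchwarzschildZeta hR.ne' (hu s hs))
    (fun s hs => interiorSchwarzschildZeta_slope_le hR (by linarith) hs.1 (hu s hs) (hm_ge s hs)
      (hineq s hs)) (hζR.trans (interiorSchwarzschildZeta_self hR.ne' _).symm)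

theorem zeta_bounded_by_interior_schwarzschild
    (R M χ : ℝ) (hR : 0 < R) (hM : 0 < 2 * M) (hMR : 2 * M < R)
    (hχ : χ = 2 * M / R)
    (m ζ ζ' : ℝ → ℝ)
    (hm_cont : ContinuousOn m (Icc 0 R))
    (hmR : m R = M)
    (hm_bound : ∀ r ∈ Ioc (0:ℝ) R, 0 ≤ 2 * m r ∧ 2 * m r < r)
    (hζ_cont : ContinuousOn ζ (Icc 0 R))
    (hζ_deriv : ∀ r ∈ Ioo (0:ℝ) R, HasDerivAt ζ (ζ' r) r)
    (hζR : ζ R = Real.sqrt (1 - χ))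
    (hm_ge : ∀ r ∈ Ioo (0:ℝ) R, m r ≥ M * r ^ 3 / R ^ 3)
    (hineq : ∀ r ∈ Ioo (0:ℝ) R,
      (1 / r) * Real.sqrt (1 - 2 * m r / r) * ζ' r ≥ M / R ^ 3) :
    ∀ r ∈ Icc (0:ℝ) R,
      ζ r ≤ (1 / 2) * (3 * Real.sqrt (1 - χ) - Real.sqrt (1 - χ * (r / R) ^ 2)) :=
  zeta_bounded_by_interior_schwarzschild_general R M χ hR hM hMR hχ m ζ ζ' hζ_cont hζ_deriv hζR
    hm_ge hineq
end

section
/- Let R > 0, 0 < 2M < R, χ = 2M/R, and let δ ≥ 0 be a real number. Let m : [0,R] → ℝ be continuous with m(R) = M and 0 ≤ 2m(r) < r for all r ∈ (0,R], and let ζ : [0,R] → ℝ be continuous on [0,R], differentiable on (0,R), with ζ(R) = √(1−χ). Suppose that for every r ∈ (0,R) one has m(r) ≥ M r³/R³ and r^{−(1+2δ)}·√(1−2m(r)/r)·ζ′(r) ≥ M/R^{3+2δ}. Then ζ(0) ≤ √(1−χ) − (χ/(2R^{2+2δ}))·∫₀^R r^{1+2δ}/√(1−χ r²/R²) dr. 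-/
open Real Set

/-!
Since the average density is bounded below, `2 m(r) / r ≥ χ r² / R²`, so the hypothesis on `ζ'`
gives `ζ'(r) ≥ (M / R^{3+2δ}) r^{1+2δ} / √(1 - χ r² / R²)` on `(0, R)`. Integrating this from
`0` to `R` and using `ζ(R) = √(1 - χ)` bounds `ζ(0)`.
-/

lemma mul_sq_div_sq_le_two_mul_div {M R m r : ℝ} (hr : 0 < r) (hm : M * r ^ 3 / R ^ 3 ≤ m) :
    2 * M / R * r ^ 2 / R ^ 2 ≤ 2 * m / r :=
  calc 2 * M / R * r ^ 2 / R ^ 2 = 2 * (M * r ^ 3 / R ^ 3) / r := by field_simp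
    _ ≤ 2 * m / r := by gcongr

lemma one_sub_mul_sq_div_sq_pos {χ R r : ℝ} (hχ : χ < 1) (hr : r ^ 2 ≤ R ^ 2) :
    0 < 1 - χ * r ^ 2 / R ^ 2 := by
  have h₀ : 0 ≤ r ^ 2 / R ^ 2 := by positivity
  have h₁ : r ^ 2 / R ^ 2 ≤ 1 := div_le_one_of_le₀ hr (sq_nonneg R)
  rw [mul_div_assoc]
  rcases le_or_gt χ 0 with hχ₀ | hχ₀
  · nlinarith
  · nlinarith

lemma continuousOn_rpow_div_sqrt {p χ R : ℝ} (hp : 0 ≤ p) (hχ : χ < 1) :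
    ContinuousOn (fun r => r ^ p / √(1 - χ * r ^ 2 / R ^ 2)) (Icc 0 R) := by
  refine (continuousOn_id.rpow_const fun _ _ => Or.inr hp).div (by fun_prop) fun r hr => ?_
  exact (sqrt_pos.2 (one_sub_mul_sq_div_sq_pos hχ (pow_le_pow_left₀ hr.1 hr.2 2))).ne'

lemma mul_rpow_div_sqrt_le {C p r s t z : ℝ} (hC : 0 ≤ C) (hr : 0 < r) (hs : 0 < s)
    (hst : s ≤ t) (h : C ≤ r ^ (-p) * √s * z) : C * (r ^ p / √t) ≤ z := by
  have hrp : 0 < r ^ p := rpow_pos_of_pos hr p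
  rw [rpow_neg hr.le, mul_assoc, le_inv_mul_iff₀ hrp] at h
  calc C * (r ^ p / √t) ≤ C * (r ^ p / √s) := by gcongr
    _ ≤ z := by rw [← mul_div_assoc, div_le_iff₀ (sqrt_pos.2 hs)]; linarith

lemma two_mul_div_div_two_mul_rpow {M R : ℝ} (a : ℝ) (hR : 0 < R) :
    2 * M / R / (2 * R ^ a) = M / R ^ (a + 1) := by
  rw [rpow_add_one hR.ne']
  field_simp

theorem anisotropic_zeta_center_bound_general
    (R M χ δ : ℝ) (hR : 0 < R) (hM : 0 < 2 * M) (hMR : 2 * M < R)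
    (hχ : χ = 2 * M / R) (hδ : 0 ≤ δ)
    (m ζ ζ' : ℝ → ℝ)
    (hm_bound : ∀ r ∈ Ioc (0:ℝ) R, 0 ≤ 2 * m r ∧ 2 * m r < r)
    (hζ_cont : ContinuousOn ζ (Icc 0 R))
    (hζ_deriv : ∀ r ∈ Ioo (0:ℝ) R, HasDerivAt ζ (ζ' r) r)
    (hζR : ζ R = Real.sqrt (1 - χ))
    (hm_ge : ∀ r ∈ Ioo (0:ℝ) R, m r ≥ M * r ^ 3 / R ^ 3)
    (hineq : ∀ r ∈ Ioo (0:ℝ) R,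
      r ^ (-(1 + 2 * δ)) * Real.sqrt (1 - 2 * m r / r) * ζ' r ≥ M / R ^ ((3:ℝ) + 2 * δ)) :
    ζ 0 ≤ Real.sqrt (1 - χ) -
      (χ / (2 * R ^ ((2:ℝ) + 2 * δ))) *
        ∫ r in (0:ℝ)..R, r ^ ((1:ℝ) + 2 * δ) / Real.sqrt (1 - χ * r ^ 2 / R ^ 2) := by
  set C := M / R ^ ((3:ℝ) + 2 * δ)
  have hC : χ / (2 * R ^ ((2:ℝ) + 2 * δ)) = C := by
    rw [hχ, two_mul_div_div_two_mul_rpow _ hR, show (2:ℝ) + 2 * δ + 1 = 3 + 2 * δ by ring]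
  have hC_nonneg : 0 ≤ C := div_nonneg (by linarith) (by positivity)
  have hχ1 : χ < 1 := by rw [hχ, div_lt_one hR]; exact hMR
  have hζ'_ge : ∀ r ∈ Ioo 0 R,
      C * (r ^ ((1:ℝ) + 2 * δ) / √(1 - χ * r ^ 2 / R ^ 2)) ≤ ζ' r := by
    intro r hr
    have hmass : 0 < 1 - 2 * m r / r := by
      rw [sub_pos, div_lt_one hr.1]
      exact (hm_bound r (Ioo_subset_Ioc_self hr)).2
    have hprofile : 1 - 2 * m r / r ≤ 1 - χ * r ^ 2 / R ^ 2 := by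
      rw [hχ]
      linarith [mul_sq_div_sq_le_two_mul_div hr.1 (hm_ge r hr)]
    exact mul_rpow_div_sqrt_le hC_nonneg hr.1 hmass hprofile (hineq r hr)
  have hint := intervalIntegral.integral_le_sub_of_hasDeriv_right_of_le hR.le hζ_cont
    (fun r hr => (hζ_deriv r hr).hasDerivWithinAt)
    ((continuousOn_rpow_div_sqrt (by linarith) hχ1).integrableOn_Icc.const_mul C) hζ'_ge
  rw [intervalIntegral.integral_const_mul, hζR] at hint
  rw [hC]
  linarith

theorem anisotropic_zeta_center_bound
    (R M χ δ : ℝ) (hR : 0 < R) (hM : 0 < 2 * M) (hMR : 2 * M < R)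
    (hχ : χ = 2 * M / R) (hδ : 0 ≤ δ)
    (m ζ ζ' : ℝ → ℝ)
    (hm_cont : ContinuousOn m (Icc 0 R))
    (hmR : m R = M)
    (hm_bound : ∀ r ∈ Ioc (0:ℝ) R, 0 ≤ 2 * m r ∧ 2 * m r < r)
    (hζ_cont : ContinuousOn ζ (Icc 0 R))
    (hζ_deriv : ∀ r ∈ Ioo (0:ℝ) R, HasDerivAt ζ (ζ' r) r)
    (hζR : ζ R = Real.sqrt (1 - χ))
    (hm_ge : ∀ r ∈ Ioo (0:ℝ) R, m r ≥ M * r ^ 3 / R ^ 3)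
    (hineq : ∀ r ∈ Ioo (0:ℝ) R,
      r ^ (-(1 + 2 * δ)) * Real.sqrt (1 - 2 * m r / r) * ζ' r ≥ M / R ^ ((3:ℝ) + 2 * δ)) :
    ζ 0 ≤ Real.sqrt (1 - χ) -
      (χ / (2 * R ^ ((2:ℝ) + 2 * δ))) *
        ∫ r in (0:ℝ)..R, r ^ ((1:ℝ) + 2 * δ) / Real.sqrt (1 - χ * r ^ 2 / R ^ 2) :=
  anisotropic_zeta_center_bound_general R M χ δ hR hM hMR hχ hδ m ζ ζ' hm_bound hζ_cont hζ_deriv hζR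
    hm_ge hineq
end

section
/- Let R > 0 and 0 < 2M < R, and set χ = 2M/R. Let m : [0,R] → ℝ be continuously differentiable with m(0) = 0, m(R) = M, m′(r) ≥ 0, and 0 ≤ 2m(r) < r for all r ∈ (0,R]. Let P : [0,R] → ℝ be differentiable with P(r) ≥ 0 for all r, P(R) = 0, and suppose P satisfies the TOV equation P′(r) = −(m(r)+4πr³P(r))·(m′(r)/(4πr²)+P(r))/(r(r−2m(r))) for all r ∈ (0,R). Then the central pressure satisfies P(0) ≥ −(1/(16πR²))·(ln(1−χ) + χ). -/
open Real Set

/-! Dropping the pressure terms from the TOV equation and enlarging `r` to `R` in the remaining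
denominator gives `-P' ≥ m m' / (4πR³ (R - 2m)) = (Φ ∘ m)' / (4πR³)` with
`Φ(u) = ∫₀ᵘ s / (R - 2s) ds`. Hence `P + Φ(m) / (4πR³)` decreases on `[0, R]`, and comparing its
values at `0` and `R` gives `P(0) ≥ Φ(M) / (4πR³) = -(ln(1 - χ) + χ) / (16πR²)`. -/

noncomputable def tovPotential (R u : ℝ) : ℝ := -(u / 2 + R / 4 * log (1 - 2 * u / R))

@[simp]
lemma tovPotential_zero (R : ℝ) : tovPotential R 0 = 0 := by
  simp [tovPotential]

lemma hasDerivAt_tovPotential {R u : ℝ} (hR : R ≠ 0) (hu : R - 2 * u ≠ 0) :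
    HasDerivAt (tovPotential R) (u / (R - 2 * u)) u := by
  have hu' : 1 - 2 * u / R ≠ 0 := by rw [one_sub_div hR]; exact div_ne_zero hu hR
  have hlog : HasDerivAt (fun u => log (1 - 2 * u / R)) (-(2 / R) / (1 - 2 * u / R)) u := by
    refine HasDerivAt.log ?_ hu'
    simpa using ((hasDerivAt_id u).const_mul 2).div_const R |>.const_sub 1
  refine (((hasDerivAt_id u).div_const 2).add (hlog.const_mul (R / 4))).neg.congr_deriv ?_
  field_simp
  ring

lemma antitoneOn_add_comp_of_hasDerivWithinAt {a b : ℝ} {P P' m m' Φ φ : ℝ → ℝ}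
    (hP : ∀ r ∈ Icc a b, HasDerivWithinAt P (P' r) (Icc a b) r)
    (hm : ∀ r ∈ Icc a b, HasDerivWithinAt m (m' r) (Icc a b) r)
    (hΦ : ∀ r ∈ Icc a b, HasDerivAt Φ (φ (m r)) (m r))
    (hle : ∀ r ∈ Ioo a b, P' r + φ (m r) * m' r ≤ 0) :
    AntitoneOn (fun r => P r + Φ (m r)) (Icc a b) := by
  have hF : ∀ r ∈ Icc a b,
      HasDerivWithinAt (fun r => P r + Φ (m r)) (P' r + φ (m r) * m' r) (Icc a b) r :=
    fun r hr => (hP r hr).add ((hΦ r hr).comp_hasDerivWithinAt r (hm r hr))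
  refine antitoneOn_of_hasDerivWithinAt_nonpos (convex_Icc a b)
    (fun r hr => (hF r hr).continuousWithinAt) (fun r hr => ?_) (by simpa using hle)
  rw [interior_Icc] at hr ⊢
  exact (hF r (Ioo_subset_Icc_self hr)).mono Ioo_subset_Icc_self

lemma tov_gradient_lower_bound {r R m m' p : ℝ} (hr : 0 < r) (hrR : r ≤ R) (hm : 0 ≤ m)
    (hmr : 2 * m < r) (hm' : 0 ≤ m') (hp : 0 ≤ p) :
    m / (R - 2 * m) / (4 * π * R ^ 3) * m' ≤
      (m + 4 * π * r ^ 3 * p) * (m' / (4 * π * r ^ 2) + p) / (r * (r - 2 * m)) := by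
  have hR : 0 < R := hr.trans_le hrR
  have hrm : 0 < r - 2 * m := by linarith
  calc m / (R - 2 * m) / (4 * π * R ^ 3) * m'
      = m * m' / (4 * π * (R ^ 3 * (R - 2 * m))) := by
        field_simp
    _ ≤ m * m' / (4 * π * (r ^ 3 * (r - 2 * m))) := by
        gcongr
    _ = m * (m' / (4 * π * r ^ 2)) / (r * (r - 2 * m)) := by
        field_simp
    _ ≤ (m + 4 * π * r ^ 3 * p) * (m' / (4 * π * r ^ 2) + p) / (r * (r - 2 * m)) := by
        gcongr
        · linarith [show 0 ≤ 4 * π * r ^ 3 * p by positivity]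
        · linarith

theorem central_pressure_lower_bound_general
    (R M χ : ℝ) (hR : 0 < R)
    (hχ : χ = 2 * M / R)
    (m m' P P' : ℝ → ℝ)
    (hm_deriv : ∀ r ∈ Icc (0:ℝ) R, HasDerivWithinAt m (m' r) (Icc 0 R) r)
    (hm0 : m 0 = 0) (hmR : m R = M)
    (hm'_nonneg : ∀ r ∈ Icc (0:ℝ) R, 0 ≤ m' r)
    (hm_bound : ∀ r ∈ Ioc (0:ℝ) R, 0 ≤ 2 * m r ∧ 2 * m r < r)
    (hP_deriv : ∀ r ∈ Icc (0:ℝ) R, HasDerivWithinAt P (P' r) (Icc 0 R) r)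
    (hP_nonneg : ∀ r ∈ Icc (0:ℝ) R, 0 ≤ P r)
    (hPR : P R = 0)
    (hTOV : ∀ r ∈ Ioo (0:ℝ) R,
      P' r = -(m r + 4 * π * r ^ 3 * P r) * (m' r / (4 * π * r ^ 2) + P r)
        / (r * (r - 2 * m r))) :
    P 0 ≥ -(1 / (16 * π * R ^ 2)) * (Real.log (1 - χ) + χ) := by
  have hmR_lt : ∀ r ∈ Icc (0:ℝ) R, 2 * m r < R := by
    rintro r ⟨hr0, hrR⟩
    rcases hr0.eq_or_lt with rfl | hr0
    · simpa [hm0] using hR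
    · linarith [(hm_bound r ⟨hr0, hrR⟩).2]
  have hanti : AntitoneOn (fun r => P r + tovPotential R (m r) / (4 * π * R ^ 3)) (Icc 0 R) := by
    refine antitoneOn_add_comp_of_hasDerivWithinAt hP_deriv hm_deriv
      (φ := fun u => u / (R - 2 * u) / (4 * π * R ^ 3))
      (fun r hr => (hasDerivAt_tovPotential hR.ne' (by linarith [hmR_lt r hr])).div_const _)
      fun r hr => ?_
    have hr' : r ∈ Icc 0 R := Ioo_subset_Icc_self hr
    obtain ⟨hm_nonneg, hm_lt⟩ := hm_bound r (Ioo_subset_Ioc_self hr)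
    have := tov_gradient_lower_bound hr.1 hr.2.le (by linarith) hm_lt (hm'_nonneg r hr')
      (hP_nonneg r hr')
    rw [hTOV r hr, neg_mul, neg_div]
    linarith
  have hends := hanti (left_mem_Icc.2 hR.le) (right_mem_Icc.2 hR.le) hR.le
  simp only [hPR, hm0, hmR, tovPotential_zero, zero_div, add_zero, zero_add] at hends
  rw [hχ]
  calc -(1 / (16 * π * R ^ 2)) * (log (1 - 2 * M / R) + 2 * M / R)
      = tovPotential R M / (4 * π * R ^ 3) := by
        unfold tovPotential
        field_simp
        ring
    _ ≤ P 0 := hends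

theorem central_pressure_lower_bound
    (R M χ : ℝ) (hR : 0 < R) (hM : 0 < 2 * M) (hMR : 2 * M < R)
    (hχ : χ = 2 * M / R)
    (m m' P P' : ℝ → ℝ)
    (hm_deriv : ∀ r ∈ Icc (0:ℝ) R, HasDerivWithinAt m (m' r) (Icc 0 R) r)
    (hm'_cont : ContinuousOn m' (Icc 0 R))
    (hm0 : m 0 = 0) (hmR : m R = M)
    (hm'_nonneg : ∀ r ∈ Icc (0:ℝ) R, 0 ≤ m' r)
    (hm_bound : ∀ r ∈ Ioc (0:ℝ) R, 0 ≤ 2 * m r ∧ 2 * m r < r)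
    (hP_deriv : ∀ r ∈ Icc (0:ℝ) R, HasDerivWithinAt P (P' r) (Icc 0 R) r)
    (hP_nonneg : ∀ r ∈ Icc (0:ℝ) R, 0 ≤ P r)
    (hPR : P R = 0)
    (hTOV : ∀ r ∈ Ioo (0:ℝ) R,
      P' r = -(m r + 4 * π * r ^ 3 * P r) * (m' r / (4 * π * r ^ 2) + P r)
        / (r * (r - 2 * m r))) :
    P 0 ≥ -(1 / (16 * π * R ^ 2)) * (Real.log (1 - χ) + χ) :=
  central_pressure_lower_bound_general R M χ hR hχ m m' P P' hm_deriv hm0 hmR hm'_nonneg hm_bound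
    hP_deriv hP_nonneg hPR hTOV
end

section
/- Let r₀ > 0 and m₀ > 0 with χ₀ := 2m₀/r₀ < 1, and let P₀ ≥ 0. Let m : [0,r₀] → ℝ be continuous with m(r₀) = m₀, 0 ≤ 2m(r) < r and m(r) ≥ m₀ r³/r₀³ for all r ∈ (0,r₀]. Let ζ : [0,r₀] → ℝ be continuous, positive on (0,r₀], differentiable on (0,r₀], with ζ(0) ≥ 0 and ζ′(r₀)/ζ(r₀) = (m₀+4πr₀³P₀)/(r₀(r₀−2m₀)). Suppose that for every r ∈ (0,r₀), (1/r)·√(1−2m(r)/r)·ζ′(r) ≥ (1/r₀)·√(1−χ₀)·ζ′(r₀). Then P₀ ≤ (1/(4πr₀²))·(√(1−χ₀) + 1 − (3/2)χ₀). -/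
/-!
Write `s = √(1 - χ₀)` and `a = 2m₀/r₀³`. The mass bound gives `√(1 - 2m(r)/r) ≤ √(1 - a r²)`, so
the slope hypothesis yields `ζ'(r) ≥ (s ζ'(r₀)/r₀) · r/√(1 - a r²)`, and `r/√(1 - a r²)` is the
derivative of `-√(1 - a r²)/a`. Integrating over `(0, r₀)` and using `ζ(0) ≥ 0` gives
`χ₀ ζ(r₀) ≥ s (1 - s) r₀ ζ'(r₀)`. The gravity relation reads `s² r₀ ζ'(r₀) = (χ₀/2 + 4πr₀²P₀) ζ(r₀)`;
eliminating `r₀ ζ'(r₀)` and cancelling the factor `1 - s` of `χ₀ = (1 - s)(1 + s)` leaves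
`4πr₀²P₀ ≤ s + 1 - 3χ₀/2`.
-/

open Real Set

theorem sub_le_sub_of_hasDerivAt_le {f g f' g' : ℝ → ℝ} {a b : ℝ} (hab : a ≤ b)
    (hf : ContinuousOn f (Icc a b)) (hg : ContinuousOn g (Icc a b))
    (hf' : ∀ x ∈ Ioo a b, HasDerivAt f (f' x) x) (hg' : ∀ x ∈ Ioo a b, HasDerivAt g (g' x) x)
    (hle : ∀ x ∈ Ioo a b, f' x ≤ g' x) : f b - f a ≤ g b - g a := by
  have hmono : MonotoneOn (fun x => g x - f x) (Icc a b) := by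
    refine monotoneOn_of_hasDerivWithinAt_nonneg (f' := fun x => g' x - f' x) (convex_Icc a b)
      (hg.sub hf) (fun x hx => ?_) (fun x hx => ?_) <;> rw [interior_Icc] at hx
    · exact ((hg' x hx).sub (hf' x hx)).hasDerivWithinAt
    · exact sub_nonneg.2 (hle x hx)
  linarith [hmono (left_mem_Icc.2 hab) (right_mem_Icc.2 hab) hab]

theorem hasDerivAt_neg_sqrt_one_sub_mul_sq_div {a r : ℝ} (ha : a ≠ 0) (hr : 0 < 1 - a * r ^ 2) :
    HasDerivAt (fun x => -√(1 - a * x ^ 2) / a) (r / √(1 - a * r ^ 2)) r := by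
  refine ((((hasDerivAt_pow 2 r).const_mul a).const_sub 1).sqrt hr.ne').neg.div_const a
    |>.congr_deriv ?_
  have := (sqrt_pos.2 hr).ne'
  field_simp
  ring

theorem mul_one_sub_sqrt_div_le_sub {f f' : ℝ → ℝ} {a K R : ℝ} (ha : 0 < a) (hR : 0 ≤ R)
    (haR : a * R ^ 2 ≤ 1) (hf : ContinuousOn f (Icc 0 R))
    (hf' : ∀ r ∈ Ioo 0 R, HasDerivAt f (f' r) r)
    (hle : ∀ r ∈ Ioo 0 R, K * (r / √(1 - a * r ^ 2)) ≤ f' r) :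
    K * (1 - √(1 - a * R ^ 2)) / a ≤ f R - f 0 := by
  have hpos (r : ℝ) (hr : r ∈ Ioo 0 R) : 0 < 1 - a * r ^ 2 := by
    nlinarith [hr.1, hr.2]
  have key := sub_le_sub_of_hasDerivAt_le hR (f := fun x => K * (-√(1 - a * x ^ 2) / a))
    (by fun_prop) hf
    (fun r hr => (hasDerivAt_neg_sqrt_one_sub_mul_sq_div ha.ne' (hpos r hr)).const_mul K) hf' hle
  convert key using 1
  simp only [ne_eq, OfNat.ofNat_ne_zero, not_false_eq_true, zero_pow, mul_zero, sub_zero,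
    sqrt_one]
  ring

theorem mul_div_sqrt_le_of_le_inv_mul_sqrt_mul {a M r κ y : ℝ} (hr : 0 < r) (hκ : 0 < κ)
    (hM : a * r ^ 3 ≤ 2 * M) (h : κ ≤ 1 / r * √(1 - 2 * M / r) * y) :
    κ * (r / √(1 - a * r ^ 2)) ≤ y := by
  have hw : √(1 - 2 * M / r) ≤ √(1 - a * r ^ 2) := by
    refine sqrt_le_sqrt (sub_le_sub_left ?_ 1)
    rw [le_div_iff₀ hr]
    linarith
  have hκr : κ * r ≤ √(1 - 2 * M / r) * y := by
    rw [← le_div_iff₀ hr]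
    rwa [one_div_mul_eq_div, div_mul_eq_mul_div] at h
  have hwy := (mul_pos hκ hr).trans_le hκr
  have hy : 0 < y := pos_of_mul_pos_right hwy (sqrt_nonneg _)
  have hv : 0 < √(1 - a * r ^ 2) := (pos_of_mul_pos_left hwy hy.le).trans_le hw
  rw [mul_div_assoc', div_le_iff₀ hv]
  nlinarith

theorem sqrt_mul_mul_one_sub_sqrt_le_mul_sub {m ζ ζ' : ℝ → ℝ} {r₀ m₀ χ : ℝ} (hr₀ : 0 < r₀)
    (hm₀ : 0 < m₀) (hχ : χ = 2 * m₀ / r₀) (hχ1 : χ < 1) (hζ'r₀ : 0 < ζ' r₀)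
    (hm : ∀ r ∈ Ioo 0 r₀, m₀ * r ^ 3 / r₀ ^ 3 ≤ m r) (hζ : ContinuousOn ζ (Icc 0 r₀))
    (hζ' : ∀ r ∈ Ioo 0 r₀, HasDerivAt ζ (ζ' r) r)
    (hslope : ∀ r ∈ Ioo 0 r₀, 1 / r₀ * √(1 - χ) * ζ' r₀ ≤ 1 / r * √(1 - 2 * m r / r) * ζ' r) :
    √(1 - χ) * (ζ' r₀ * r₀) * (1 - √(1 - χ)) ≤ χ * (ζ r₀ - ζ 0) := by
  have hderiv (r : ℝ) (hr : r ∈ Ioo 0 r₀) :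
      1 / r₀ * √(1 - χ) * ζ' r₀ * (r / √(1 - 2 * m₀ / r₀ ^ 3 * r ^ 2)) ≤ ζ' r := by
    refine mul_div_sqrt_le_of_le_inv_mul_sqrt_mul hr.1 (by positivity) ?_ (hslope r hr)
    calc 2 * m₀ / r₀ ^ 3 * r ^ 3 = 2 * (m₀ * r ^ 3 / r₀ ^ 3) := by ring
      _ ≤ 2 * m r := by linarith [hm r hr]
  have haR : 2 * m₀ / r₀ ^ 3 * r₀ ^ 2 = χ := by rw [hχ]; field_simp
  have hrise := mul_one_sub_sqrt_div_le_sub (by positivity) hr₀.le (haR.trans_lt hχ1).le hζ hζ'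
    hderiv
  have hlhs : 1 / r₀ * √(1 - χ) * ζ' r₀ * (1 - √(1 - χ)) / (2 * m₀ / r₀ ^ 3) =
      √(1 - χ) * (ζ' r₀ * r₀) * (1 - √(1 - χ)) / χ := by rw [hχ]; field_simp
  rw [haR, hlhs, div_le_iff₀ (by rw [hχ]; positivity)] at hrise
  linarith

theorem le_sqrt_one_sub_add_one_sub_three_halves_mul {χ Q Z Y : ℝ} (hχ : 0 < χ) (hχ1 : χ < 1)
    (hZ : 0 < Z) (hgrav : Y * (1 - χ) = (χ / 2 + Q) * Z)
    (hY : √(1 - χ) * Y * (1 - √(1 - χ)) ≤ χ * Z) :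
    Q ≤ √(1 - χ) + 1 - 3 / 2 * χ := by
  set s := √(1 - χ)
  have hs2 : s ^ 2 = 1 - χ := sq_sqrt (by linarith)
  have hs : 0 ≤ s := sqrt_nonneg _
  have hs1 : s < 1 := by nlinarith
  have hmul : (χ / 2 + Q) * (1 - s) * Z ≤ χ * s * Z := by
    calc (χ / 2 + Q) * (1 - s) * Z = s * (s * Y * (1 - s)) := by
          rw [mul_right_comm, ← hgrav, ← hs2]; ring
      _ ≤ s * (χ * Z) := mul_le_mul_of_nonneg_left hY hs
      _ = χ * s * Z := by ring
  have hcancel : (χ / 2 + Q) * (1 - s) ≤ (1 + s) * s * (1 - s) := by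
    nlinarith [le_of_mul_le_mul_right hmul hZ]
  nlinarith [le_of_mul_le_mul_right hcancel (by linarith : 0 < 1 - s)]

theorem interior_pressure_upper_bound_general
    (r₀ m₀ χ₀ P₀ : ℝ) (hr₀ : 0 < r₀) (hm₀ : 0 < m₀)
    (hχ₀ : χ₀ = 2 * m₀ / r₀) (hχ₀lt : χ₀ < 1) (hP₀ : 0 ≤ P₀)
    (m ζ ζ' : ℝ → ℝ)
    (hm_ge : ∀ r ∈ Ioc (0:ℝ) r₀, m r ≥ m₀ * r ^ 3 / r₀ ^ 3)
    (hζ_cont : ContinuousOn ζ (Icc 0 r₀))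
    (hζ_pos : ∀ r ∈ Ioc (0:ℝ) r₀, 0 < ζ r)
    (hζ_deriv : ∀ r ∈ Ioc (0:ℝ) r₀, HasDerivAt ζ (ζ' r) r)
    (hζ0 : 0 ≤ ζ 0)
    (hgrav : ζ' r₀ / ζ r₀ = (m₀ + 4 * π * r₀ ^ 3 * P₀) / (r₀ * (r₀ - 2 * m₀)))
    (hineq : ∀ r ∈ Ioo (0:ℝ) r₀,
      (1 / r) * Real.sqrt (1 - 2 * m r / r) * ζ' r ≥
        (1 / r₀) * Real.sqrt (1 - χ₀) * ζ' r₀) :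
    P₀ ≤ (1 / (4 * π * r₀ ^ 2)) * (Real.sqrt (1 - χ₀) + 1 - (3 / 2) * χ₀) := by
  have hm₀_eq : m₀ = χ₀ * r₀ / 2 := by rw [hχ₀]; field_simp
  have hχ₀pos : 0 < χ₀ := by rw [hχ₀]; positivity
  have hζr₀ : 0 < ζ r₀ := hζ_pos r₀ ⟨hr₀, le_rfl⟩
  have hgrav_scaled : ζ' r₀ * r₀ * (1 - χ₀) = (χ₀ / 2 + 4 * π * r₀ ^ 2 * P₀) * ζ r₀ := by
    have hden : r₀ * (r₀ - 2 * m₀) = r₀ ^ 2 * (1 - χ₀) := by rw [hm₀_eq]; ring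
    rw [hden, div_eq_div_iff hζr₀.ne' (mul_pos (pow_pos hr₀ 2) (sub_pos.2 hχ₀lt)).ne',
      hm₀_eq] at hgrav
    refine mul_left_cancel₀ hr₀.ne' ?_
    linear_combination hgrav
  have hζ'r₀ : 0 < ζ' r₀ := by
    have : 0 < ζ' r₀ * (r₀ * (1 - χ₀)) := by rw [← mul_assoc, hgrav_scaled]; positivity
    exact pos_of_mul_pos_left this (mul_pos hr₀ (sub_pos.2 hχ₀lt)).le
  have hrise := sqrt_mul_mul_one_sub_sqrt_le_mul_sub hr₀ hm₀ hχ₀ hχ₀lt hζ'r₀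
    (fun r hr => hm_ge r ⟨hr.1, hr.2.le⟩) hζ_cont (fun r hr => hζ_deriv r ⟨hr.1, hr.2.le⟩) hineq
  have hQ := le_sqrt_one_sub_add_one_sub_three_halves_mul hχ₀pos hχ₀lt hζr₀ hgrav_scaled
    (by linarith [mul_nonneg hζ0 hχ₀pos.le])
  rw [one_div_mul_eq_div, le_div_iff₀ (by positivity)]
  linarith

theorem interior_pressure_upper_bound
    (r₀ m₀ χ₀ P₀ : ℝ) (hr₀ : 0 < r₀) (hm₀ : 0 < m₀)
    (hχ₀ : χ₀ = 2 * m₀ / r₀) (hχ₀lt : χ₀ < 1) (hP₀ : 0 ≤ P₀)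
    (m ζ ζ' : ℝ → ℝ)
    (hm_cont : ContinuousOn m (Icc 0 r₀))
    (hmr₀ : m r₀ = m₀)
    (hm_bound : ∀ r ∈ Ioc (0:ℝ) r₀, 0 ≤ 2 * m r ∧ 2 * m r < r)
    (hm_ge : ∀ r ∈ Ioc (0:ℝ) r₀, m r ≥ m₀ * r ^ 3 / r₀ ^ 3)
    (hζ_cont : ContinuousOn ζ (Icc 0 r₀))
    (hζ_pos : ∀ r ∈ Ioc (0:ℝ) r₀, 0 < ζ r)
    (hζ_deriv : ∀ r ∈ Ioc (0:ℝ) r₀, HasDerivAt ζ (ζ' r) r)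
    (hζ0 : 0 ≤ ζ 0)
    (hgrav : ζ' r₀ / ζ r₀ = (m₀ + 4 * π * r₀ ^ 3 * P₀) / (r₀ * (r₀ - 2 * m₀)))
    (hineq : ∀ r ∈ Ioo (0:ℝ) r₀,
      (1 / r) * Real.sqrt (1 - 2 * m r / r) * ζ' r ≥
        (1 / r₀) * Real.sqrt (1 - χ₀) * ζ' r₀) :
    P₀ ≤ (1 / (4 * π * r₀ ^ 2)) * (Real.sqrt (1 - χ₀) + 1 - (3 / 2) * χ₀) :=
  interior_pressure_upper_bound_general r₀ m₀ χ₀ P₀ hr₀ hm₀ hχ₀ hχ₀lt hP₀ m ζ ζ' hm_ge hζ_cont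
    hζ_pos hζ_deriv hζ0 hgrav hineq
end

section
/- For every real x ≥ 1 and every χ ∈ [0, 8/9): (1−√(1−χ))/(3√(1−χ)−1) ≤ x if and only if χ ≤ 4x(2x+1)/(3x+1)². In particular, 4x(2x+1)/(3x+1)² < 8/9 for all x ≥ 1 and tends to 8/9 as x → ∞. -/
/-!
With `s = √(1 - χ)` the left-hand side is `(1 - s) / (3s - 1)`, and for `s > 1/3` it is at most `x`
exactly when `s ≥ (x + 1) / (3x + 1)`. Squaring, this says `χ ≤ 1 - ((x + 1) / (3x + 1))²`, which is
the compactness bound. Since `(x + 1) / (3x + 1)` decreases to `1/3` and stays above it,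
the bound stays below `1 - 1/9 = 8/9` and tends to it.
-/

open Real Set Filter

lemma one_third_lt_sqrt_one_sub {χ : ℝ} (hχ : χ < 8 / 9) : 1 / 3 < √(1 - χ) :=
  (Real.lt_sqrt (by norm_num)).2 (by linarith)

lemma one_third_lt_add_one_div {x : ℝ} (hx : -1 / 3 < x) : 1 / 3 < (x + 1) / (3 * x + 1) := by
  rw [lt_div_iff₀ (by linarith)]
  linarith

lemma one_sub_div_le_iff {s x : ℝ} (hs : 1 / 3 < s) (hx : -1 / 3 < x) :
    (1 - s) / (3 * s - 1) ≤ x ↔ (x + 1) / (3 * x + 1) ≤ s := by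
  rw [div_le_iff₀ (by linarith), div_le_iff₀ (by linarith)]
  constructor <;> intro h <;> linarith

lemma compactness_bound_eq {x : ℝ} (hx : 3 * x + 1 ≠ 0) :
    4 * x * (2 * x + 1) / (3 * x + 1) ^ 2 = 1 - ((x + 1) / (3 * x + 1)) ^ 2 := by
  rw [div_pow, eq_sub_iff_add_eq, ← add_div, div_eq_one_iff_eq (pow_ne_zero 2 hx)]
  ring

lemma tendsto_add_one_div_atTop :
    Tendsto (fun x : ℝ => (x + 1) / (3 * x + 1)) atTop (nhds (1 / 3)) := by
  have hden : Tendsto (fun x : ℝ => 3 * x + 1) atTop atTop :=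
    tendsto_atTop_add_const_right _ _ (tendsto_id.const_mul_atTop (by norm_num))
  have hlim : Tendsto (fun x : ℝ => 1 / 3 + 2 / 3 * (3 * x + 1)⁻¹) atTop (nhds (1 / 3)) := by
    simpa only [Pi.inv_apply, mul_zero, add_zero] using (hden.inv_tendsto_atTop.const_mul (2 / 3)).const_add (1 / 3)
  refine hlim.congr' ?_
  filter_upwards [eventually_gt_atTop 0] with x hx
  field_simp
  ring

theorem compactness_bound_from_density_ratio :
    (∀ x : ℝ, 1 ≤ x → ∀ χ ∈ Ico (0:ℝ) (8 / 9),
      ((1 - Real.sqrt (1 - χ)) / (3 * Real.sqrt (1 - χ) - 1) ≤ x ↔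
        χ ≤ 4 * x * (2 * x + 1) / (3 * x + 1) ^ 2)) ∧
    (∀ x : ℝ, 1 ≤ x → 4 * x * (2 * x + 1) / (3 * x + 1) ^ 2 < 8 / 9) ∧
    Tendsto (fun x : ℝ => 4 * x * (2 * x + 1) / (3 * x + 1) ^ 2) atTop
      (nhds (8 / 9)) := by
  refine ⟨fun x hx χ hχ => ?_, fun x hx => ?_, ?_⟩
  · have hr := one_third_lt_add_one_div (x := x) (by linarith)
    rw [one_sub_div_le_iff (one_third_lt_sqrt_one_sub hχ.2) (by linarith),
      Real.le_sqrt' (by linarith), compactness_bound_eq (by linarith)]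
    constructor <;> intro h <;> linarith
  · have hr := one_third_lt_add_one_div (x := x) (by linarith)
    rw [compactness_bound_eq (by linarith)]
    nlinarith
  · have hlim := (tendsto_add_one_div_atTop.pow 2).const_sub 1
    norm_num at hlim
    refine hlim.congr' ?_
    filter_upwards [eventually_gt_atTop 0] with x hx
    rw [compactness_bound_eq (by linarith)]
end

section
/- Let ρ₀ > 0 and P_c > 0. Define m(r) = (4π/3)ρ₀r³ and P(r) = (P_c + ρ₀/3)·(1−(8π/3)ρ₀r²)^{3/4} − ρ₀/3 on the interval where (8π/3)ρ₀r² < 1. Then: (i) P(0) = P_c; (ii) P satisfies the linear (post-Newtonian) hydrostatic equation P′(r) = −(m(r)+4πr³P(r))·ρ₀/(r(r−2m(r))) on that interval; (iii) the radius R > 0 at which P(R) = 0 exists and its compactness satisfies χ := 2m(R)/R = (8π/3)ρ₀R² = 1 − (ρ₀/(3P_c+ρ₀))^{4/3}; and (iv) for every χ ∈ (0,1) there exists P_c > 0 realizing that compactness. -/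
open Real Set

theorem post_newtonian_constant_density_star
    (ρ₀ Pc : ℝ) (hρ : 0 < ρ₀) (hPc : 0 < Pc)
    (m P : ℝ → ℝ)
    (hm : ∀ r, m r = (4 * π / 3) * ρ₀ * r ^ 3)
    (hP : ∀ r, P r = (Pc + ρ₀ / 3) * (1 - (8 * π / 3) * ρ₀ * r ^ 2) ^ ((3:ℝ) / 4) - ρ₀ / 3) :
    P 0 = Pc ∧
    (∀ r : ℝ, 0 < r → (8 * π / 3) * ρ₀ * r ^ 2 < 1 →
      HasDerivAt P (-(m r + 4 * π * r ^ 3 * P r) * ρ₀ / (r * (r - 2 * m r))) r) ∧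
    (∃ R : ℝ, 0 < R ∧ (8 * π / 3) * ρ₀ * R ^ 2 < 1 ∧ P R = 0 ∧
      2 * m R / R = (8 * π / 3) * ρ₀ * R ^ 2 ∧
      (8 * π / 3) * ρ₀ * R ^ 2 = 1 - (ρ₀ / (3 * Pc + ρ₀)) ^ ((4:ℝ) / 3)) ∧
    (∀ χ ∈ Ioo (0:ℝ) 1, ∃ Pc' : ℝ, 0 < Pc' ∧
      1 - (ρ₀ / (3 * Pc' + ρ₀)) ^ ((4:ℝ) / 3) = χ) := by
  have hπ : 0 < π := pi_pos
  set c : ℝ := (8 * π / 3) * ρ₀ with hc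
  have hcpos : 0 < c := by positivity
  set A : ℝ := Pc + ρ₀ / 3 with hA
  have hApos : 0 < A := by positivity
  refine ⟨?_, ?_, ?_, ?_⟩
  · -- P 0 = Pc
    rw [hP 0]
    norm_num
    rw [hA]; ring
  · -- the ODE
    intro r hr h1
    have hu : 0 < 1 - c * r ^ 2 := by linarith
    set u : ℝ := 1 - c * r ^ 2 with hudef
    have hg : HasDerivAt (fun x : ℝ => 1 - c * x ^ 2) (-(c * (2 * r))) r := by
      have h := ((hasDerivAt_pow 2 r).const_mul c).const_sub 1
      simpa using h
    have hrpow : HasDerivAt (fun x : ℝ => (1 - c * x ^ 2) ^ ((3:ℝ)/4))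
        (-(c * (2 * r)) * ((3:ℝ)/4) * u ^ ((3:ℝ)/4 - 1)) r :=
      hg.rpow_const (Or.inl (ne_of_gt hu))
    have hPd : HasDerivAt P (A * (-(c * (2 * r)) * ((3:ℝ)/4) * u ^ ((3:ℝ)/4 - 1))) r := by
      have h := (hrpow.const_mul A).sub_const (ρ₀ / 3)
      have hfun : P = fun x : ℝ => A * (1 - c * x ^ 2) ^ ((3:ℝ)/4) - ρ₀ / 3 := by
        funext x; rw [hP x]
      rw [hfun]
      exact h
    convert hPd using 1
    set v : ℝ := u ^ ((3:ℝ)/4 - 1) with hv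
    have hu34 : u ^ ((3:ℝ)/4) = u * v := by
      rw [hv]
      nth_rewrite 2 [← Real.rpow_one u]
      rw [← Real.rpow_add hu]
      norm_num
    have hrne : r ≠ 0 := ne_of_gt hr
    have hune : u ≠ 0 := ne_of_gt hu
    rw [hm r, hP r]
    have hsub : 1 - (8 * π / 3) * ρ₀ * r ^ 2 = u := by rw [hudef, hc]
    rw [hsub, hu34]
    have hden : r - 2 * ((4 * π / 3) * ρ₀ * r ^ 3) = r * u := by
      rw [hudef, hc]; ring
    rw [hden]
    field_simp
    ring
  · -- the radius
    set s : ℝ := ρ₀ / (3 * Pc + ρ₀) with hs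
    have hspos : 0 < s := by positivity
    have hslt : s < 1 := by
      rw [hs, div_lt_one (by linarith)]; linarith
    set k : ℝ := s ^ ((4:ℝ)/3) with hk
    have hkpos : 0 < k := Real.rpow_pos_of_pos hspos _
    have hklt : k < 1 := by
      rw [hk]
      calc s ^ ((4:ℝ)/3) < 1 ^ ((4:ℝ)/3) :=
            Real.rpow_lt_rpow (le_of_lt hspos) hslt (by norm_num)
        _ = 1 := Real.one_rpow _
    have hfrac : 0 < (1 - k) / c := div_pos (by linarith) hcpos
    set R : ℝ := Real.sqrt ((1 - k) / c) with hR
    have hRpos : 0 < R := Real.sqrt_pos.mpr hfrac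
    have hR2 : R ^ 2 = (1 - k) / c := by
      rw [hR, sq]; exact Real.mul_self_sqrt (le_of_lt hfrac)
    have hcc : (8 * π / 3) * ρ₀ * R ^ 2 = 1 - k := by
      rw [← hc, hR2]; field_simp
    refine ⟨R, hRpos, by rw [hcc]; linarith, ?_, ?_, by rw [hcc]⟩
    · -- P R = 0
      rw [hP]
      have h1 : 1 - (8 * π / 3) * ρ₀ * R ^ 2 = k := by rw [hcc]; ring
      rw [h1]
      have hk34 : k ^ ((3:ℝ)/4) = s := by
        rw [hk, ← Real.rpow_mul (le_of_lt hspos)]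
        norm_num
      rw [hk34, hs, hA]
      field_simp
      ring
    · -- compactness
      rw [hm]
      have hRne : R ≠ 0 := ne_of_gt hRpos
      field_simp
      ring
  · -- surjectivity onto (0,1)
    intro χ hχ
    obtain ⟨hχ0, hχ1⟩ := hχ
    have h1χ : 0 < 1 - χ := by linarith
    set t : ℝ := (1 - χ) ^ ((3:ℝ)/4) with ht
    have htpos : 0 < t := Real.rpow_pos_of_pos h1χ _
    have htlt : t < 1 := by
      rw [ht]
      calc (1 - χ) ^ ((3:ℝ)/4) < 1 ^ ((3:ℝ)/4) :=
            Real.rpow_lt_rpow (le_of_lt h1χ) (by linarith) (by norm_num)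
        _ = 1 := Real.one_rpow _
    refine ⟨ρ₀ * (1 - t) / (3 * t), div_pos (mul_pos hρ (by linarith)) (by linarith), ?_⟩
    have htne : t ≠ 0 := ne_of_gt htpos
    have h3 : 3 * (ρ₀ * (1 - t) / (3 * t)) + ρ₀ = ρ₀ / t := by
      field_simp; ring
    rw [h3]
    have h4 : ρ₀ / (ρ₀ / t) = t := by
      field_simp
    rw [h4, ht, ← Real.rpow_mul (le_of_lt h1χ)]
    norm_num
end

section
/- Let g : (0,∞) → ℝ be continuously differentiable, fix r₀ > 0 and constants C₁, C₂ ∈ ℝ, and define m(r) = r²g(r), ρ(r) = (2rg(r) + r²g′(r))/(4πr²), and P(r) = −(1/(2π))·∫_{r₀}^r g(s)²/s ds − g(r)²/(8π) + C₂. Then for all r > 0: m′(r) = 4πr²ρ(r) and P′(r) = −g(r)·ρ(r); that is, the triple (m, ρ, P) generated from the gravity profile g solves the Newtonian equation of hydrostatic equilibrium dP/dr = −(m(r)/r²)ρ(r). -/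
open Real Set

/-!
Since `m = r²g`, the mass equation `m' = 4πr²ρ` is just the product rule, and `ρ` is defined
so that it holds. For the pressure, `P' = -g²/(2πr) - gg'/(4π)`, which is
`-g · (2rg + r²g')/(4πr²) = -gρ`. The lower limit `r₀ > 0` keeps the integrand `g(s)²/s`
continuous on the whole interval of integration, so the fundamental theorem of calculus applies.
-/

theorem ContinuousOn.integral_hasDerivAt_right {E : Type*} [NormedAddCommGroup E]
    [NormedSpace ℝ E] [CompleteSpace E] {f : ℝ → E} {U : Set ℝ} {a b : ℝ} (hf : ContinuousOn f U)
    (hU : IsOpen U) (hab : uIcc a b ⊆ U) :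
    HasDerivAt (fun x => ∫ s in a..x, f s) (f b) b :=
  have hb : b ∈ U := hab right_mem_uIcc
  intervalIntegral.integral_hasDerivAt_right ((hf.mono hab).intervalIntegrable)
    (hf.stronglyMeasurableAtFilter hU b hb) (hf.continuousAt (hU.mem_nhds hb))

theorem HasDerivAt.sq_mul {g : ℝ → ℝ} {d r : ℝ} (hg : HasDerivAt g d r) :
    HasDerivAt (fun x => x ^ 2 * g x) (2 * r * g r + r ^ 2 * d) r := by
  refine ((hasDerivAt_pow 2 r).mul hg).congr_deriv ?_
  push_cast
  ring

theorem ContinuousOn.sq_div_id {g : ℝ → ℝ} (hg : ContinuousOn g (Ioi 0)) :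
    ContinuousOn (fun s => g s ^ 2 / s) (Ioi 0) :=
  (hg.pow 2).div continuousOn_id fun _ hx => ne_of_gt hx

theorem hasDerivAt_pressure {g g' : ℝ → ℝ} (hg : ∀ r : ℝ, 0 < r → HasDerivAt g (g' r) r)
    {r₀ r : ℝ} (hr₀ : 0 < r₀) (C : ℝ) (hr : 0 < r) :
    HasDerivAt (fun x => -(1 / (2 * π)) * (∫ s in r₀..x, g s ^ 2 / s) - g x ^ 2 / (8 * π) + C)
      (-(g r * ((2 * r * g r + r ^ 2 * g' r) / (4 * π * r ^ 2)))) r := by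
  have hsub : uIcc r₀ r ⊆ Ioi 0 := fun x hx => lt_of_lt_of_le (lt_min hr₀ hr) hx.1
  have hgc : ContinuousOn g (Ioi 0) := fun x hx => (hg x hx).continuousAt.continuousWithinAt
  have hint := hgc.sq_div_id.integral_hasDerivAt_right isOpen_Ioi hsub
  have hsq : HasDerivAt (fun x => g x ^ 2) (2 * g r * g' r) r := by
    simpa using (hg r hr).fun_pow 2
  refine (((hint.const_mul _).sub (hsq.div_const _)).add_const C).congr_deriv ?_
  field_simp
  ring

theorem newtonian_algorithm_solves_hydrostatic_general
    (g g' : ℝ → ℝ)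
    (hg : ∀ r : ℝ, 0 < r → HasDerivAt g (g' r) r)
    (r₀ : ℝ) (hr₀ : 0 < r₀) (C₂ : ℝ)
    (m ρ P : ℝ → ℝ)
    (hm : ∀ r, m r = r ^ 2 * g r)
    (hρ : ∀ r, ρ r = (2 * r * g r + r ^ 2 * g' r) / (4 * π * r ^ 2))
    (hP : ∀ r, P r = -(1 / (2 * π)) * (∫ s in r₀..r, g s ^ 2 / s) - g r ^ 2 / (8 * π) + C₂) :
    ∀ r : ℝ, 0 < r →
      HasDerivAt m (4 * π * r ^ 2 * ρ r) r ∧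
      HasDerivAt P (-(g r * ρ r)) r := by
  intro r hr
  obtain rfl : m = _ := funext hm
  obtain rfl : ρ = _ := funext hρ
  obtain rfl : P = _ := funext hP
  refine ⟨?_, hasDerivAt_pressure hg hr₀ C₂ hr⟩
  rw [mul_div_cancel₀ _ (by positivity)]
  exact (hg r hr).sq_mul

theorem newtonian_algorithm_solves_hydrostatic
    (g g' : ℝ → ℝ)
    (hg : ∀ r : ℝ, 0 < r → HasDerivAt g (g' r) r)
    (hg' : ContinuousOn g' (Ioi 0))
    (r₀ : ℝ) (hr₀ : 0 < r₀) (C₁ C₂ : ℝ)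
    (m ρ P : ℝ → ℝ)
    (hm : ∀ r, m r = r ^ 2 * g r)
    (hρ : ∀ r, ρ r = (2 * r * g r + r ^ 2 * g' r) / (4 * π * r ^ 2))
    (hP : ∀ r, P r = -(1 / (2 * π)) * (∫ s in r₀..r, g s ^ 2 / s) - g r ^ 2 / (8 * π) + C₂) :
    ∀ r : ℝ, 0 < r →
      HasDerivAt m (4 * π * r ^ 2 * ρ r) r ∧
      HasDerivAt P (-(g r * ρ r)) r :=
  newtonian_algorithm_solves_hydrostatic_general g g' hg r₀ hr₀ C₂ m ρ P hm hρ hP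
end

section
/- Let I ⊆ (0,∞) be an open interval, g : I → ℝ continuously differentiable with 1 + r·g(r) > 0 for all r ∈ I, fix r₀ ∈ I and C ∈ ℝ. Define ϑ(r) = ∫_{r₀}^r g(s)·(1−s·g(s))/(1+s·g(s)) ds and m(r) = g(r)r²(1+g(r)r/2)/(1+r·g(r))² + (2r³·e^{2ϑ(r)}/(1+r·g(r))²)·(C + ∫_{r₀}^r g(s)²·e^{−2ϑ(s)}/(s(1+s·g(s))) ds). Then m is differentiable on I and satisfies the linear first-order ODE m′(r) = (r²/(1+g(r)r))·(g′(r)+g(r)²−g(r)/r) + (m(r)/(r(1+r·g(r))))·(3(1+g(r)r) − 2r²(g′(r)+g(r)²)) for all r ∈ I. -/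
/-!
Write the mass function as `m = μ + Λ K`, where `Λ = 2 r³ e^{2ϑ} / (1 + r g)²` satisfies the
homogeneous equation `Λ' = B Λ` (this is exactly what `ϑ' = g (1 - r g) / (1 + r g)` is chosen
for) and `K` is the bracket `C + ∫ …`. Variation of constants reduces the ODE `m' = A + B m` to
the identity `μ' + Λ K' = A + B μ`, in which the exponentials cancel, leaving a rational identity in
`r`, `g r` and `g' r`.
-/

open Real Set

theorem ContinuousOn.hasDerivAt_intervalIntegral {E : Type*} [NormedAddCommGroup E]
    [NormedSpace ℝ E] [CompleteSpace E] {f : ℝ → E} {s : Set ℝ} (hs : IsOpen s)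
    [s.OrdConnected] (hf : ContinuousOn f s) {a x : ℝ} (ha : a ∈ s) (hx : x ∈ s) :
    HasDerivAt (fun u => ∫ t in a..u, f t) (f x) x :=
  intervalIntegral.integral_hasDerivAt_right
    ((hf.mono (Set.OrdConnected.uIcc_subset ‹_› ha hx)).intervalIntegrable)
    (hf.stronglyMeasurableAtFilter hs x hx) (hf.continuousAt (hs.mem_nhds hx))

theorem HasDerivAt.variation_of_constants {u w K : ℝ → ℝ} {u' k A B r : ℝ}
    (hu : HasDerivAt u u' r) (hw : HasDerivAt w (B * w r) r) (hK : HasDerivAt K k r)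
    (h : u' + w r * k = A + B * u r) :
    HasDerivAt (fun x => u x + w x * K x) (A + B * (u r + w r * K r)) r := by
  refine (hu.fun_add (hw.fun_mul hK)).congr_deriv ?_
  linear_combination h

/-- The mass ODE reads `m' = isotropicSource r g g' + isotropicCoeff r g g' * m`. -/
noncomputable def isotropicCoeff (r G G' : ℝ) : ℝ :=
  (3 * (1 + G * r) - 2 * r ^ 2 * (G' + G ^ 2)) / (r * (1 + r * G))

noncomputable def isotropicSource (r G G' : ℝ) : ℝ :=
  r ^ 2 / (1 + G * r) * (G' + G ^ 2 - G / r)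

/-- Twice the paper's integrating factor `λ = r³ e^{2ϑ} / (1 + r g)²`. -/
noncomputable def integratingFactor (g ϑ : ℝ → ℝ) (r : ℝ) : ℝ :=
  2 * r ^ 3 * exp (2 * ϑ r) / (1 + r * g r) ^ 2

noncomputable def particularMass (g : ℝ → ℝ) (r : ℝ) : ℝ :=
  g r * r ^ 2 * (1 + g r * r / 2) / (1 + r * g r) ^ 2

theorem hasDerivAt_integratingFactor {g ϑ : ℝ → ℝ} {r G' : ℝ} (hg : HasDerivAt g G' r)
    (hϑ : HasDerivAt ϑ (g r * (1 - r * g r) / (1 + r * g r)) r) (hD : 1 + r * g r ≠ 0) :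
    HasDerivAt (integratingFactor g ϑ)
      (isotropicCoeff r (g r) G' * integratingFactor g ϑ r) r := by
  have hnum := ((hasDerivAt_pow 3 r).const_mul 2).fun_mul (hϑ.const_mul 2).exp
  have hden := (((hasDerivAt_id' r).fun_mul hg).const_add 1).fun_pow 2
  refine (hnum.fun_div hden (pow_ne_zero 2 hD)).congr_deriv ?_
  rw [isotropicCoeff, integratingFactor]
  field_simp
  ring

theorem hasDerivAt_particularMass {g : ℝ → ℝ} {r G' : ℝ} (hg : HasDerivAt g G' r) (hr : r ≠ 0)
    (hD : 1 + r * g r ≠ 0) :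
    HasDerivAt (particularMass g)
      (isotropicSource r (g r) G' + isotropicCoeff r (g r) G' * particularMass g r -
        2 * r ^ 2 * g r ^ 2 / (1 + r * g r) ^ 3) r := by
  have hnum := (hg.fun_mul (hasDerivAt_pow 2 r)).fun_mul
    (((hg.fun_mul (hasDerivAt_id' r)).div_const 2).const_add 1)
  have hden := (((hasDerivAt_id' r).fun_mul hg).const_add 1).fun_pow 2
  refine (hnum.fun_div hden (pow_ne_zero 2 hD)).congr_deriv ?_
  have hD' : 1 + g r * r ≠ 0 := by rwa [mul_comm]
  rw [isotropicCoeff, isotropicSource, particularMass]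
  field_simp
  ring

theorem isotropic_mass_algorithm_solves_ODE_general
    (a b : ℝ) (ha : 0 ≤ a)
    (g g' : ℝ → ℝ)
    (hg : ∀ r ∈ Ioo a b, HasDerivAt g (g' r) r)
    (hpos : ∀ r ∈ Ioo a b, 0 < 1 + r * g r)
    (r₀ : ℝ) (hr₀ : r₀ ∈ Ioo a b) (C : ℝ)
    (ϑ m : ℝ → ℝ)
    (hϑ : ∀ r, ϑ r = ∫ s in r₀..r, g s * (1 - s * g s) / (1 + s * g s))
    (hm : ∀ r, m r =
      g r * r ^ 2 * (1 + g r * r / 2) / (1 + r * g r) ^ 2 +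
        (2 * r ^ 3 * Real.exp (2 * ϑ r) / (1 + r * g r) ^ 2) *
          (C + ∫ s in r₀..r, g s ^ 2 * Real.exp (-(2 * ϑ s)) / (s * (1 + s * g s)))) :
    ∀ r ∈ Ioo a b,
      HasDerivAt m
        ((r ^ 2 / (1 + g r * r)) * (g' r + g r ^ 2 - g r / r) +
          (m r / (r * (1 + r * g r))) *
            (3 * (1 + g r * r) - 2 * r ^ 2 * (g' r + g r ^ 2))) r := by
  have hr_pos : ∀ r ∈ Ioo a b, 0 < r := fun r hr => ha.trans_lt hr.1
  have hgc : ContinuousOn g (Ioo a b) := fun r hr => (hg r hr).continuousAt.continuousWithinAt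
  have hϑ' : ∀ r ∈ Ioo a b, HasDerivAt ϑ (g r * (1 - r * g r) / (1 + r * g r)) r := by
    rw [show ϑ = _ from funext hϑ]
    refine fun r hr => ContinuousOn.hasDerivAt_intervalIntegral isOpen_Ioo ?_ hr₀ hr
    exact (hgc.mul (continuousOn_const.sub (continuousOn_id.mul hgc))).div
      (continuousOn_const.add (continuousOn_id.mul hgc)) fun r hr => (hpos r hr).ne'
  have hK : ∀ r ∈ Ioo a b, HasDerivAt
      (fun x => C + ∫ s in r₀..x, g s ^ 2 * exp (-(2 * ϑ s)) / (s * (1 + s * g s)))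
      (g r ^ 2 * exp (-(2 * ϑ r)) / (r * (1 + r * g r))) r := by
    refine fun r hr => (ContinuousOn.hasDerivAt_intervalIntegral isOpen_Ioo ?_ hr₀ hr).const_add C
    have hϑc : ContinuousOn ϑ (Ioo a b) := fun r hr => (hϑ' r hr).continuousAt.continuousWithinAt
    exact ((hgc.pow 2).mul (continuous_exp.comp_continuousOn (continuousOn_const.mul hϑc).neg)).div
      (continuousOn_id.mul (continuousOn_const.add (continuousOn_id.mul hgc)))
      fun r hr => (mul_pos (hr_pos r hr) (hpos r hr)).ne'
  intro r hr
  have hr0 := (hr_pos r hr).ne'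
  have hD := (hpos r hr).ne'
  rw [show m = _ from funext hm]
  beta_reduce
  refine ((hasDerivAt_particularMass (hg r hr) hr0 hD).variation_of_constants
    (A := isotropicSource r (g r) (g' r))
    (hasDerivAt_integratingFactor (hg r hr) (hϑ' r hr) hD) (hK r hr) ?_).congr_deriv ?_
  · rw [particularMass, integratingFactor, exp_neg]
    field_simp
    ring
  · rw [isotropicCoeff, isotropicSource, particularMass, integratingFactor]
    field_simp

theorem isotropic_mass_algorithm_solves_ODE
    (a b : ℝ) (ha : 0 ≤ a) (hab : a < b)
    (g g' : ℝ → ℝ)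
    (hg : ∀ r ∈ Ioo a b, HasDerivAt g (g' r) r)
    (hg' : ContinuousOn g' (Ioo a b))
    (hpos : ∀ r ∈ Ioo a b, 0 < 1 + r * g r)
    (r₀ : ℝ) (hr₀ : r₀ ∈ Ioo a b) (C : ℝ)
    (ϑ m : ℝ → ℝ)
    (hϑ : ∀ r, ϑ r = ∫ s in r₀..r, g s * (1 - s * g s) / (1 + s * g s))
    (hm : ∀ r, m r =
      g r * r ^ 2 * (1 + g r * r / 2) / (1 + r * g r) ^ 2 +
        (2 * r ^ 3 * Real.exp (2 * ϑ r) / (1 + r * g r) ^ 2) *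
          (C + ∫ s in r₀..r, g s ^ 2 * Real.exp (-(2 * ϑ s)) / (s * (1 + s * g s)))) :
    ∀ r ∈ Ioo a b,
      HasDerivAt m
        ((r ^ 2 / (1 + g r * r)) * (g' r + g r ^ 2 - g r / r) +
          (m r / (r * (1 + r * g r))) *
            (3 * (1 + g r * r) - 2 * r ^ 2 * (g' r + g r ^ 2))) r :=
  isotropic_mass_algorithm_solves_ODE_general a b ha g g' hg hpos r₀ hr₀ C ϑ m hϑ hm
end

section
/- Let 0 < a < b, let ρ : [a,b] → ℝ be continuous with ρ ≥ 0, and let m₁, m₂ : [a,b] → ℝ be continuous with 0 ≤ m₁(r) ≤ m₂(r) and 2m₂(r) < r for all r ∈ [a,b]. Suppose P₁, P₂ : [a,b] → ℝ are differentiable, nonnegative, satisfy the TOV equations P_i′(r) = −(m_i(r)+4πr³P_i(r))·(ρ(r)+P_i(r))/(r(r−2m_i(r))) for i = 1,2 and all r ∈ (a,b), and satisfy P₁(b) = P₂(b). Then P₂(r) ≥ P₁(r) for all r ∈ [a,b]. -/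
/-!
Put `u = P₁ - P₂` and let `g(m, P) = (m + 4πr³P) / (r(r - 2m))` be the gravity profile
(`tovGravity`). Subtracting
the two TOV equations gives the exact identity
`u' = -g(m₁, ρ + P₁ + P₂) · u + (g(m₂, P₂) - g(m₁, P₂)) · (ρ + P₂)`,
whose last term is nonnegative because `g` is increasing in `m`. The coefficient of `u` is
continuous, hence bounded by some `K` on `[a, b]`, so `u' ≥ -K u` wherever `u > 0`. Then `e^{Kr} u`
is nondecreasing on every interval on which `u > 0`; starting from a point with `u > 0` and moving
right to the first point where `u ≤ 0` (which exists since `u(b) = 0`) gives a contradiction.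
-/

open Real Set

section BackwardComparison

variable {a b : ℝ} {u u' : ℝ → ℝ}

theorem monotoneOn_exp_mul_of_deriv_ge_neg_const_mul {K : ℝ} (hu : ContinuousOn u (Icc a b))
    (hderiv : ∀ x ∈ Ioo a b, HasDerivAt u (u' x) x)
    (hbound : ∀ x ∈ Ioo a b, -(K * u x) ≤ u' x) :
    MonotoneOn (fun x => exp (K * x) * u x) (Icc a b) := by
  refine monotoneOn_of_hasDerivWithinAt_nonneg (f' := fun x => exp (K * x) * (K * u x + u' x))
    (convex_Icc a b) ((continuous_exp.comp (continuous_const_mul K)).continuousOn.mul hu)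
    (fun x hx => ?_) (fun x hx => ?_)
  · rw [interior_Icc] at hx
    have hexp : HasDerivAt (fun x => exp (K * x)) (exp (K * x) * K) x := by
      simpa using ((hasDerivAt_id x).const_mul K).exp
    exact (hexp.mul (hderiv x hx)).hasDerivWithinAt.congr_deriv (by ring)
  · rw [interior_Icc] at hx
    have := hbound x hx
    exact mul_nonneg (exp_pos _).le (by linarith)

theorem nonpos_of_right_nonpos_of_deriv_ge_neg_const_mul {K : ℝ} (hu : ContinuousOn u (Icc a b))
    (hderiv : ∀ x ∈ Ioo a b, HasDerivAt u (u' x) x)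
    (hbound : ∀ x ∈ Ioo a b, 0 < u x → -(K * u x) ≤ u' x) (hb : u b ≤ 0) :
    ∀ x ∈ Icc a b, u x ≤ 0 := by
  intro x₀ hx₀
  by_contra! hx₀_pos
  set S := Icc x₀ b ∩ u ⁻¹' Iic 0
  have hS_closed : IsClosed S :=
    (hu.mono (Icc_subset_Icc_left hx₀.1)).preimage_isClosed_of_isClosed isClosed_Icc isClosed_Iic
  have hS_bdd : BddBelow S := ⟨x₀, fun x hx => hx.1.1⟩
  -- `c` is the first point to the right of `x₀` where `u ≤ 0`.
  set c := sInf S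
  have hcS : c ∈ S := hS_closed.csInf_mem ⟨b, ⟨hx₀.2, le_rfl⟩, hb⟩ hS_bdd
  have hu_pos : ∀ x ∈ Ico x₀ c, 0 < u x := fun x hx => by
    by_contra! hux
    exact hx.2.not_ge (csInf_le hS_bdd ⟨⟨hx.1, hx.2.le.trans hcS.1.2⟩, hux⟩)
  have hsub : Icc x₀ c ⊆ Icc a b := Icc_subset_Icc hx₀.1 hcS.1.2
  have hmono := monotoneOn_exp_mul_of_deriv_ge_neg_const_mul (K := K) (hu.mono hsub)
    (fun x hx => hderiv x (Ioo_subset_Ioo hx₀.1 hcS.1.2 hx))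
    (fun x hx => hbound x (Ioo_subset_Ioo hx₀.1 hcS.1.2 hx) (hu_pos x ⟨hx.1.le, hx.2⟩))
  have hle := hmono (left_mem_Icc.2 hcS.1.1) (right_mem_Icc.2 hcS.1.1) hcS.1.1
  have hc_nonpos : exp (K * c) * u c ≤ 0 := mul_nonpos_of_nonneg_of_nonpos (exp_pos _).le hcS.2
  have hx₀_exp_pos : 0 < exp (K * x₀) * u x₀ := mul_pos (exp_pos _) hx₀_pos
  exact absurd (hle.trans hc_nonpos) hx₀_exp_pos.not_ge

theorem nonpos_of_right_nonpos_of_deriv_ge_neg_mul {h : ℝ → ℝ} (hu : ContinuousOn u (Icc a b))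
    (hderiv : ∀ x ∈ Ioo a b, HasDerivAt u (u' x) x) (hh : ContinuousOn h (Icc a b))
    (hbound : ∀ x ∈ Ioo a b, 0 < u x → -(h x * u x) ≤ u' x) (hb : u b ≤ 0) :
    ∀ x ∈ Icc a b, u x ≤ 0 := by
  obtain ⟨K, hK⟩ := isCompact_Icc.bddAbove_image hh
  refine nonpos_of_right_nonpos_of_deriv_ge_neg_const_mul (K := K) hu hderiv
    (fun x hx hux => ?_) hb
  have hhK : h x ≤ K := hK (mem_image_of_mem h (Ioo_subset_Icc_self hx))
  nlinarith [hbound x hx hux]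

end BackwardComparison

section TOV

noncomputable def tovGravity (m P r : ℝ) : ℝ := (m + 4 * π * r ^ 3 * P) / (r * (r - 2 * m))

theorem tovGravity_mono_mass {m₁ m₂ P r : ℝ} (hr : 0 < r) (hP : 0 ≤ P) (hm : m₁ ≤ m₂)
    (hm₂ : 2 * m₂ < r) : tovGravity m₁ P r ≤ tovGravity m₂ P r := by
  unfold tovGravity
  have hs : 0 ≤ 4 * π * r ^ 3 * P := by positivity
  rw [div_le_div_iff₀ (by nlinarith) (by nlinarith)]
  -- cross-multiplied, the difference of the two sides is `r (m₂ - m₁) (r + 2 · 4πr³P)`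
  nlinarith [mul_nonneg (mul_nonneg hr.le (sub_nonneg.2 hm))
    (by linarith : 0 ≤ r + 2 * (4 * π * r ^ 3 * P))]

theorem tov_rhs_sub (ρ m₁ m₂ P₁ P₂ r : ℝ) :
    -(m₁ + 4 * π * r ^ 3 * P₁) * (ρ + P₁) / (r * (r - 2 * m₁)) -
        -(m₂ + 4 * π * r ^ 3 * P₂) * (ρ + P₂) / (r * (r - 2 * m₂)) =
      -(tovGravity m₁ (ρ + P₁ + P₂) r * (P₁ - P₂)) +
        (tovGravity m₂ P₂ r - tovGravity m₁ P₂ r) * (ρ + P₂) := by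
  unfold tovGravity
  ring

theorem neg_mul_le_tov_rhs_sub {ρ m₁ m₂ P₁ P₂ r : ℝ} (hr : 0 < r) (hρ : 0 ≤ ρ) (hP₂ : 0 ≤ P₂)
    (hm : m₁ ≤ m₂) (hm₂ : 2 * m₂ < r) :
    -(tovGravity m₁ (ρ + P₁ + P₂) r * (P₁ - P₂)) ≤
      -(m₁ + 4 * π * r ^ 3 * P₁) * (ρ + P₁) / (r * (r - 2 * m₁)) -
        -(m₂ + 4 * π * r ^ 3 * P₂) * (ρ + P₂) / (r * (r - 2 * m₂)) := by
  rw [tov_rhs_sub]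
  exact le_add_of_nonneg_right <|
    mul_nonneg (sub_nonneg.2 (tovGravity_mono_mass hr hP₂ hm hm₂)) (add_nonneg hρ hP₂)

end TOV

theorem tov_pressure_comparison_general
    (a b : ℝ) (ha : 0 < a)
    (ρ m₁ m₂ P₁ P₂ : ℝ → ℝ)
    (hρ_cont : ContinuousOn ρ (Icc a b))
    (hρ_nonneg : ∀ r ∈ Icc a b, 0 ≤ ρ r)
    (hm₁_cont : ContinuousOn m₁ (Icc a b))
    (hm_le : ∀ r ∈ Icc a b, m₁ r ≤ m₂ r)
    (hm₂_lt : ∀ r ∈ Icc a b, 2 * m₂ r < r)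
    (hP₁_cont : ContinuousOn P₁ (Icc a b))
    (hP₂_cont : ContinuousOn P₂ (Icc a b))
    (hP₂_nonneg : ∀ r ∈ Icc a b, 0 ≤ P₂ r)
    (hTOV₁ : ∀ r ∈ Ioo a b,
      HasDerivAt P₁ (-(m₁ r + 4 * π * r ^ 3 * P₁ r) * (ρ r + P₁ r) / (r * (r - 2 * m₁ r))) r)
    (hTOV₂ : ∀ r ∈ Ioo a b,
      HasDerivAt P₂ (-(m₂ r + 4 * π * r ^ 3 * P₂ r) * (ρ r + P₂ r) / (r * (r - 2 * m₂ r))) r)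
    (hPb : P₁ b = P₂ b) :
    ∀ r ∈ Icc a b, P₁ r ≤ P₂ r := by
  have hr_pos : ∀ r ∈ Icc a b, 0 < r := fun r hr => ha.trans_le hr.1
  have hcoeff_cont : ContinuousOn (fun r => tovGravity (m₁ r) (ρ r + P₁ r + P₂ r) r) (Icc a b) := by
    refine ContinuousOn.div (by fun_prop) (by fun_prop) fun r hr => ?_
    have := hm_le r hr
    have := hm₂_lt r hr
    exact mul_ne_zero (hr_pos r hr).ne' (by linarith)
  intro r hr
  refine sub_nonpos.1 <| nonpos_of_right_nonpos_of_deriv_ge_neg_mul (u := fun r => P₁ r - P₂ r)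
    (hP₁_cont.sub hP₂_cont) (fun x hx => (hTOV₁ x hx).sub (hTOV₂ x hx)) hcoeff_cont
    (fun x hx _ => ?_) (by simp [hPb]) r hr
  have hx := Ioo_subset_Icc_self hx
  exact neg_mul_le_tov_rhs_sub (hr_pos x hx) (hρ_nonneg x hx) (hP₂_nonneg x hx) (hm_le x hx)
    (hm₂_lt x hx)

theorem tov_pressure_comparison
    (a b : ℝ) (ha : 0 < a) (hab : a < b)
    (ρ m₁ m₂ P₁ P₂ : ℝ → ℝ)
    (hρ_cont : ContinuousOn ρ (Icc a b))
    (hρ_nonneg : ∀ r ∈ Icc a b, 0 ≤ ρ r)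
    (hm₁_cont : ContinuousOn m₁ (Icc a b))
    (hm₂_cont : ContinuousOn m₂ (Icc a b))
    (hm₁_nonneg : ∀ r ∈ Icc a b, 0 ≤ m₁ r)
    (hm_le : ∀ r ∈ Icc a b, m₁ r ≤ m₂ r)
    (hm₂_lt : ∀ r ∈ Icc a b, 2 * m₂ r < r)
    (hP₁_cont : ContinuousOn P₁ (Icc a b))
    (hP₂_cont : ContinuousOn P₂ (Icc a b))
    (hP₁_nonneg : ∀ r ∈ Icc a b, 0 ≤ P₁ r)
    (hP₂_nonneg : ∀ r ∈ Icc a b, 0 ≤ P₂ r)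
    (hTOV₁ : ∀ r ∈ Ioo a b,
      HasDerivAt P₁ (-(m₁ r + 4 * π * r ^ 3 * P₁ r) * (ρ r + P₁ r) / (r * (r - 2 * m₁ r))) r)
    (hTOV₂ : ∀ r ∈ Ioo a b,
      HasDerivAt P₂ (-(m₂ r + 4 * π * r ^ 3 * P₂ r) * (ρ r + P₂ r) / (r * (r - 2 * m₂ r))) r)
    (hPb : P₁ b = P₂ b) :
    ∀ r ∈ Icc a b, P₁ r ≤ P₂ r :=
  tov_pressure_comparison_general a b ha ρ m₁ m₂ P₁ P₂ hρ_cont hρ_nonneg hm₁_cont hm_le hm₂_lt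
    hP₁_cont hP₂_cont hP₂_nonneg hTOV₁ hTOV₂ hPb
end
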